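/- arXiv:cs/0303022 — 5 statements merged into one kernel-verified Lean document; each statement's English description precedes it below -/
import Mathlib

section
/- (Goldreich–Ron) For all β > 0 and λ ≥ 0, if m = n^{1/2 + β + λ}, then P{ |∑_{i=1}^n k_i(x)(k_i(x)−1)/(m(m−1)) · 1/‖p‖² − 1| ≤ 3/n^{β/2} } ≥ 1 − 4/(9 n^{λ}), where x ∈ U^m is drawn from the product measure. -/
/-- Number of keys of the sequence `x` (counted with multiplicity) hashed into slot `i`. -/
def kcount {U : Type*} [Fintype U] {n m : ℕ} (h : U → Fin n) (x : Fin m → U) (i : Fin n) : ℕ :=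
  (Finset.univ.filter (fun j => h (x j) = i)).card

/-- Probability of a set `S` of key sequences, under the product measure induced by
the probability mass function `q` on the key space `U`. -/
noncomputable def Pr {U : Type*} [Fintype U] {m : ℕ} (q : U → ℝ) (S : Set (Fin m → U)) : ℝ :=
  ∑ x : Fin m → U, S.indicator (fun y => ∏ j, q (y j)) x

/-- The empirical collision probability `∑ i, k_i(x)(k_i(x) − 1) / (m(m−1))`
of a sequence `x` of `m` keys. -/
noncomputable def collEst {U : Type*} [Fintype U] {n m : ℕ} (h : U → Fin n)
    (x : Fin m → U) : ℝ :=
  ∑ i : Fin n, (kcount h x i : ℝ) * ((kcount h x i : ℝ) - 1) / ((m : ℝ) * ((m : ℝ) - 1))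



open Finset

section GR
variable {U : Type*} [Fintype U] {n m : ℕ}
  (q : U → ℝ) (h : U → Fin n) (p : Fin n → ℝ)

/-- master product/expectation lemma -/
lemma gr_master (hq1 : ∑ u, q u = 1)
    (hp : ∀ i, p i = ∑ u ∈ Finset.univ.filter (fun u => h u = i), q u)
    (s : Finset (Fin m)) (v : Fin m → Fin n) :
    ∑ x : Fin m → U, ((∏ j, q (x j)) * ∏ j ∈ s, (if h (x j) = v j then (1:ℝ) else 0))
      = ∏ j ∈ s, p (v j) := by
  have key : ∀ x : Fin m → U,
      (∏ j, q (x j)) * ∏ j ∈ s, (if h (x j) = v j then (1:ℝ) else 0)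
      = ∏ j, (q (x j) * if j ∈ s then (if h (x j) = v j then (1:ℝ) else 0) else 1) := by
    intro x
    rw [Finset.prod_mul_distrib]
    congr 1
    rw [Finset.prod_ite_mem, Finset.univ_inter]
  rw [Finset.sum_congr rfl (fun x _ => key x), ← Fintype.prod_sum (fun (j : Fin m) (u : U) => q u * if j ∈ s then (if h u = v j then (1:ℝ) else 0) else 1)]
  have per : ∀ j : Fin m,
      (∑ u, q u * if j ∈ s then (if h u = v j then (1:ℝ) else 0) else 1)
      = if j ∈ s then p (v j) else 1 := by
    intro j
    by_cases hj : j ∈ s <;> simp [hj, hq1, mul_ite, mul_one, mul_zero]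
    rw [hp (v j), Finset.sum_filter]
  rw [Finset.prod_congr rfl (fun j _ => per j), Finset.prod_ite_mem, Finset.univ_inter]

end GR

section GR2
variable {U : Type*} [Fintype U] {n m : ℕ}
  {q : U → ℝ} {h : U → Fin n} {p : Fin n → ℝ}
  (hq1 : ∑ u, q u = 1)
  (hp : ∀ i, p i = ∑ u ∈ Finset.univ.filter (fun u => h u = i), q u)

omit hq1 hp in
lemma gr_ind2 (y z : Fin n) : (if y = z then (1:ℝ) else 0)
    = ∑ i, (if y = i then (1:ℝ) else 0) * (if z = i then 1 else 0) := by
  by_cases hyz : y = z <;> simp [hyz, Finset.sum_ite_eq, eq_comm]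

include hq1 hp

lemma gr_E2 {a b : Fin m} (hab : a ≠ b) :
    ∑ x : Fin m → U, ((∏ j, q (x j)) * (if h (x a) = h (x b) then (1:ℝ) else 0))
      = ∑ i, p i * p i := by
  have pt : ∀ x : Fin m → U, (∏ j, q (x j)) * (if h (x a) = h (x b) then (1:ℝ) else 0)
      = ∑ i, (∏ j, q (x j)) * ∏ j ∈ ({a, b} : Finset (Fin m)),
          (if h (x j) = (fun _ => i) j then (1:ℝ) else 0) := by
    intro x
    rw [gr_ind2 (h (x a)) (h (x b)), Finset.mul_sum]
    exact Finset.sum_congr rfl fun i _ => by rw [Finset.prod_pair hab]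
  rw [Finset.sum_congr rfl fun x _ => pt x, Finset.sum_comm]
  exact Finset.sum_congr rfl fun i _ => by
    rw [gr_master q h p hq1 hp {a,b} (fun _ => i), Finset.prod_pair hab]

end GR2

section GR3
variable {U : Type*} [Fintype U] {n m : ℕ}
  {q : U → ℝ} {h : U → Fin n} {p : Fin n → ℝ}
  (hq1 : ∑ u, q u = 1)
  (hp : ∀ i, p i = ∑ u ∈ Finset.univ.filter (fun u => h u = i), q u)

omit hq1 hp in
lemma gr_ind3 (y z w : Fin n) : (if y = z then (1:ℝ) else 0) * (if y = w then 1 else 0)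
    = ∑ i, (if y = i then (1:ℝ) else 0) * ((if z = i then 1 else 0) * (if w = i then 1 else 0)) := by
  have e : ∀ i : Fin n, (if y = i then (1:ℝ) else 0) * ((if z = i then 1 else 0) * (if w = i then 1 else 0))
      = if y = i then ((if z = i then (1:ℝ) else 0) * (if w = i then 1 else 0)) else 0 := by
    intro i; by_cases hi : y = i <;> simp [hi]
  rw [Finset.sum_congr rfl fun i _ => e i,
    Finset.sum_ite_eq Finset.univ y fun i => ((if z = i then (1:ℝ) else 0) * (if w = i then 1 else 0))]
  simp [eq_comm]

include hq1 hp

lemma gr_E3 {a b c : Fin m} (hab : a ≠ b) (hac : a ≠ c) (hbc : b ≠ c) :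
    ∑ x : Fin m → U, ((∏ j, q (x j)) *
        ((if h (x a) = h (x b) then (1:ℝ) else 0) * (if h (x a) = h (x c) then 1 else 0)))
      = ∑ i, p i * (p i * p i) := by
  have hprod : ∀ (f : Fin m → ℝ), ∏ j ∈ ({a, b, c} : Finset (Fin m)), f j = f a * (f b * f c) := by
    intro f
    rw [Finset.prod_insert (by simp [hab, hac]), Finset.prod_insert (by simp [hbc]),
      Finset.prod_singleton]
  have pt : ∀ x : Fin m → U, (∏ j, q (x j)) *
        ((if h (x a) = h (x b) then (1:ℝ) else 0) * (if h (x a) = h (x c) then 1 else 0))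
      = ∑ i, (∏ j, q (x j)) * ∏ j ∈ ({a, b, c} : Finset (Fin m)),
          (if h (x j) = (fun _ => i) j then (1:ℝ) else 0) := by
    intro x
    rw [gr_ind3 (h (x a)) (h (x b)) (h (x c)), Finset.mul_sum]
    exact Finset.sum_congr rfl fun i _ => by rw [hprod]
  rw [Finset.sum_congr rfl fun x _ => pt x, Finset.sum_comm]
  exact Finset.sum_congr rfl fun i _ => by
    rw [gr_master q h p hq1 hp {a,b,c} (fun _ => i), hprod]

lemma gr_E4 {a b c d : Fin m} (hab : a ≠ b) (hac : a ≠ c) (had : a ≠ d)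
    (hbc : b ≠ c) (hbd : b ≠ d) (hcd : c ≠ d) :
    ∑ x : Fin m → U, ((∏ j, q (x j)) *
        ((if h (x a) = h (x b) then (1:ℝ) else 0) * (if h (x c) = h (x d) then 1 else 0)))
      = (∑ i, p i * p i) * (∑ i, p i * p i) := by
  have hprod : ∀ (f : Fin m → ℝ), ∏ j ∈ ({a, b, c, d} : Finset (Fin m)), f j
      = f a * (f b * (f c * f d)) := by
    intro f
    rw [Finset.prod_insert (by simp [hab, hac, had]), Finset.prod_insert (by simp [hbc, hbd]),
      Finset.prod_insert (by simp [hcd]), Finset.prod_singleton]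
  have pt : ∀ x : Fin m → U, (∏ j, q (x j)) *
        ((if h (x a) = h (x b) then (1:ℝ) else 0) * (if h (x c) = h (x d) then 1 else 0))
      = ∑ i, ∑ i', (∏ j, q (x j)) * ∏ j ∈ ({a, b, c, d} : Finset (Fin m)),
          (if h (x j) = (fun l => if l = a ∨ l = b then i else i') j then (1:ℝ) else 0) := by
    intro x
    rw [gr_ind2 (h (x a)) (h (x b)), gr_ind2 (h (x c)) (h (x d)), Finset.sum_mul_sum,
      Finset.mul_sum]
    refine Finset.sum_congr rfl fun i _ => ?_
    rw [Finset.mul_sum]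
    refine Finset.sum_congr rfl fun i' _ => ?_
    rw [hprod]
    simp only [eq_self_iff_true, true_or, or_true, if_true,
      hac.symm, hbc.symm, had.symm, hbd.symm, or_self, if_false, if_neg,
      (by simp [hac.symm, hbc.symm] : (c = a ∨ c = b) = False),
      (by simp [had.symm, hbd.symm] : (d = a ∨ d = b) = False)]
    ring
  rw [Finset.sum_congr rfl fun x _ => pt x, Finset.sum_comm]
  rw [Finset.sum_mul_sum]
  refine Finset.sum_congr rfl fun i _ => ?_
  rw [Finset.sum_comm]
  refine Finset.sum_congr rfl fun i' _ => ?_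
  rw [gr_master q h p hq1 hp {a,b,c,d} (fun l => if l = a ∨ l = b then i else i'), hprod]
  simp only [eq_self_iff_true, true_or, or_true, if_true,
    (by simp [hac.symm, hbc.symm] : (c = a ∨ c = b) = False),
    (by simp [had.symm, hbd.symm] : (d = a ∨ d = b) = False), if_false]
  ring

end GR3

section GR4
variable {U : Type*} [Fintype U] {n m : ℕ}
  {q : U → ℝ} {h : U → Fin n} {p : Fin n → ℝ}
  (hq1 : ∑ u, q u = 1)
  (hp : ∀ i, p i = ∑ u ∈ Finset.univ.filter (fun u => h u = i), q u)

omit hq1 hp in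
lemma gr_chi_sym (y z : Fin n) : (if y = z then (1:ℝ) else 0) = if z = y then 1 else 0 := by
  by_cases hyz : y = z <;> simp [hyz, eq_comm]

omit hq1 hp in
lemma gr_chi_mul_self (y z : Fin n) :
    (if y = z then (1:ℝ) else 0) * (if y = z then 1 else 0) = if y = z then 1 else 0 := by
  by_cases hyz : y = z <;> simp [hyz]

include hq1 hp

/-- shared-index second moment: all four sub-cases -/
lemma gr_EZZ_share {j k j' k' : Fin m} (hjk : j ≠ k) (hj'k' : j' ≠ k')
    (hne1 : ¬(j' = j ∧ k' = k)) (hne2 : ¬(j' = k ∧ k' = j))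
    (hsh : j' = j ∨ j' = k ∨ k' = j ∨ k' = k) :
    ∑ x : Fin m → U, ((∏ j, q (x j)) *
        ((if h (x j) = h (x k) then (1:ℝ) else 0) * (if h (x j') = h (x k') then 1 else 0)))
      = ∑ i, p i * (p i * p i) := by
  have sym2 : ∀ (a b c : Fin m), a ≠ b → a ≠ c → b ≠ c →
      ∑ x : Fin m → U, ((∏ j, q (x j)) *
        ((if h (x b) = h (x a) then (1:ℝ) else 0) * (if h (x a) = h (x c) then 1 else 0)))
      = ∑ i, p i * (p i * p i) := by
    intro a b c hab hac hbc
    calc ∑ x : Fin m → U, ((∏ j, q (x j)) *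
            ((if h (x b) = h (x a) then (1:ℝ) else 0) * (if h (x a) = h (x c) then 1 else 0)))
        = ∑ x : Fin m → U, ((∏ j, q (x j)) *
            ((if h (x a) = h (x b) then (1:ℝ) else 0) * (if h (x a) = h (x c) then 1 else 0))) :=
          Finset.sum_congr rfl fun x _ => by rw [gr_chi_sym (h (x b)) (h (x a))]
      _ = ∑ i, p i * (p i * p i) := gr_E3 hq1 hp hab hac hbc
  have sym3 : ∀ (a b c : Fin m), a ≠ b → a ≠ c → b ≠ c →
      ∑ x : Fin m → U, ((∏ j, q (x j)) *
        ((if h (x a) = h (x b) then (1:ℝ) else 0) * (if h (x c) = h (x a) then 1 else 0)))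
      = ∑ i, p i * (p i * p i) := by
    intro a b c hab hac hbc
    calc ∑ x : Fin m → U, ((∏ j, q (x j)) *
            ((if h (x a) = h (x b) then (1:ℝ) else 0) * (if h (x c) = h (x a) then 1 else 0)))
        = ∑ x : Fin m → U, ((∏ j, q (x j)) *
            ((if h (x a) = h (x b) then (1:ℝ) else 0) * (if h (x a) = h (x c) then 1 else 0))) :=
          Finset.sum_congr rfl fun x _ => by rw [gr_chi_sym (h (x c)) (h (x a))]
      _ = ∑ i, p i * (p i * p i) := gr_E3 hq1 hp hab hac hbc
  have sym4 : ∀ (a b c : Fin m), a ≠ b → a ≠ c → b ≠ c →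
      ∑ x : Fin m → U, ((∏ j, q (x j)) *
        ((if h (x b) = h (x a) then (1:ℝ) else 0) * (if h (x c) = h (x a) then 1 else 0)))
      = ∑ i, p i * (p i * p i) := by
    intro a b c hab hac hbc
    calc ∑ x : Fin m → U, ((∏ j, q (x j)) *
            ((if h (x b) = h (x a) then (1:ℝ) else 0) * (if h (x c) = h (x a) then 1 else 0)))
        = ∑ x : Fin m → U, ((∏ j, q (x j)) *
            ((if h (x a) = h (x b) then (1:ℝ) else 0) * (if h (x a) = h (x c) then 1 else 0))) :=
          Finset.sum_congr rfl fun x _ => by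
            rw [gr_chi_sym (h (x b)) (h (x a)), gr_chi_sym (h (x c)) (h (x a))]
      _ = ∑ i, p i * (p i * p i) := gr_E3 hq1 hp hab hac hbc
  rcases hsh with hc | hc | hc | hc
  · -- j' = j : factors χ(h xj = h xk) χ(h xj = h xk')
    have hjk' : j ≠ k' := hc ▸ hj'k'
    have hkk' : k ≠ k' := fun hh => hne1 ⟨hc, hh.symm⟩
    simp only [hc]
    exact gr_E3 hq1 hp hjk hjk' hkk'
  · -- j' = k : χ(h xj = h xk) χ(h xk = h xk')
    have hkk' : k ≠ k' := hc ▸ hj'k'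
    have hjk'2 : j ≠ k' := fun hh => hne2 ⟨hc, hh.symm⟩
    simp only [hc]
    exact sym2 k j k' hjk.symm hkk' hjk'2
  · -- k' = j : χ(h xj = h xk) χ(h xj' = h xj)
    have hj'j : j' ≠ j := fun hh => hj'k' (hh.trans hc.symm)
    have hj'k2 : j' ≠ k := fun hh => hne2 ⟨hh, hc⟩
    simp only [hc]
    exact sym3 j k j' hjk hj'j.symm hj'k2.symm
  · -- k' = k : χ(h xj = h xk) χ(h xj' = h xk)
    have hj'k2 : j' ≠ k := fun hh => hj'k' (hh.trans hc.symm)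
    have hj'j : j' ≠ j := fun hh => hne1 ⟨hh, hc⟩
    simp only [hc]
    exact sym4 k j j' hjk.symm hj'k2.symm hj'j.symm
end GR4

section GR5
variable {U : Type*} [Fintype U] {n m : ℕ}
  {q : U → ℝ} {h : U → Fin n} {p : Fin n → ℝ}
  (hq1 : ∑ u, q u = 1)
  (hp : ∀ i, p i = ∑ u ∈ Finset.univ.filter (fun u => h u = i), q u)

include hq1 hp

lemma gr_EZZ_eq {j k : Fin m} (hjk : j ≠ k) :
    (∑ x : Fin m → U, ((∏ j, q (x j)) *
        ((if h (x j) = h (x k) then (1:ℝ) else 0) * (if h (x j) = h (x k) then 1 else 0))))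
      = ∑ i, p i * p i := by
  calc ∑ x : Fin m → U, ((∏ j, q (x j)) *
          ((if h (x j) = h (x k) then (1:ℝ) else 0) * (if h (x j) = h (x k) then 1 else 0)))
      = ∑ x : Fin m → U, ((∏ j, q (x j)) * (if h (x j) = h (x k) then (1:ℝ) else 0)) :=
        Finset.sum_congr rfl fun x _ => by rw [gr_chi_mul_self]
    _ = ∑ i, p i * p i := gr_E2 hq1 hp hjk

lemma gr_EZZ_eq' {j k : Fin m} (hjk : j ≠ k) :
    (∑ x : Fin m → U, ((∏ j, q (x j)) *
        ((if h (x j) = h (x k) then (1:ℝ) else 0) * (if h (x k) = h (x j) then 1 else 0))))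
      = ∑ i, p i * p i := by
  calc ∑ x : Fin m → U, ((∏ j, q (x j)) *
          ((if h (x j) = h (x k) then (1:ℝ) else 0) * (if h (x k) = h (x j) then 1 else 0)))
      = ∑ x : Fin m → U, ((∏ j, q (x j)) *
          ((if h (x j) = h (x k) then (1:ℝ) else 0) * (if h (x j) = h (x k) then 1 else 0))) :=
        Finset.sum_congr rfl fun x _ => by rw [gr_chi_sym (h (x k)) (h (x j))]
    _ = ∑ i, p i * p i := gr_EZZ_eq hq1 hp hjk

lemma gr_per_e {j k : Fin m} (hjk : j ≠ k) (hm2 : 2 ≤ m)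
    (hS : (∑ i, p i * p i)^2 ≤ ∑ i, p i * (p i * p i)) :
    ∑ e' ∈ (Finset.univ.offDiag : Finset (Fin m × Fin m)),
        ((∑ x : Fin m → U, ((∏ j, q (x j)) *
          ((if h (x j) = h (x k) then (1:ℝ) else 0) *
            (if h (x e'.1) = h (x e'.2) then 1 else 0))))
         - (∑ i, p i * p i)^2)
      ≤ 2*((∑ i, p i * p i) - (∑ i, p i * p i)^2)
        + 4*((m:ℝ) - 2)*((∑ i, p i * (p i * p i)) - (∑ i, p i * p i)^2) := by
  classical
  set t : ℝ := ∑ i, p i * p i with ht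
  set S3 : ℝ := ∑ i, p i * (p i * p i) with hS3
  set g : (Fin m × Fin m) → ℝ := fun e' =>
    (∑ x : Fin m → U, ((∏ j, q (x j)) *
        ((if h (x j) = h (x k) then (1:ℝ) else 0) *
          (if h (x e'.1) = h (x e'.2) then 1 else 0)))) - t^2 with hg
  set od : Finset (Fin m × Fin m) := Finset.univ.offDiag with hod
  rw [← Finset.sum_filter_add_sum_filter_not od
    (fun e' => (e'.1 = j ∧ e'.2 = k) ∨ (e'.1 = k ∧ e'.2 = j)) g]
  have hfilter1 : od.filter (fun e' => (e'.1 = j ∧ e'.2 = k) ∨ (e'.1 = k ∧ e'.2 = j))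
      = {(j,k), (k,j)} := by
    ext e'
    simp only [Finset.mem_filter, hod, Finset.mem_offDiag, Finset.mem_univ, true_and,
      Finset.mem_insert, Finset.mem_singleton, Prod.ext_iff]
    constructor
    · rintro ⟨_, hh | hh⟩
      · exact Or.inl ⟨hh.1, hh.2⟩
      · exact Or.inr ⟨hh.1, hh.2⟩
    · rintro (hh | hh)
      · exact ⟨by rw [hh.1, hh.2]; exact hjk, Or.inl ⟨hh.1, hh.2⟩⟩
      · exact ⟨by rw [hh.1, hh.2]; exact hjk.symm, Or.inr ⟨hh.1, hh.2⟩⟩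
  have hsum1 : ∑ e' ∈ od.filter (fun e' => (e'.1 = j ∧ e'.2 = k) ∨ (e'.1 = k ∧ e'.2 = j)), g e'
      = 2*(t - t^2) := by
    rw [hfilter1, Finset.sum_pair (by simp [Prod.ext_iff, hjk])]
    have g1 : g (j, k) = t - t^2 := by
      simp only [hg]
      rw [gr_EZZ_eq hq1 hp hjk]
    have g2 : g (k, j) = t - t^2 := by
      simp only [hg]
      rw [gr_EZZ_eq' hq1 hp hjk]
    rw [g1, g2]; ring
  rw [hsum1]
  have hrest : ∑ e' ∈ od.filter (fun e' => ¬((e'.1 = j ∧ e'.2 = k) ∨ (e'.1 = k ∧ e'.2 = j))), g e'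
      ≤ 4*((m:ℝ) - 2)*(S3 - t^2) := by
    rw [← Finset.sum_filter_add_sum_filter_not
      (od.filter (fun e' => ¬((e'.1 = j ∧ e'.2 = k) ∨ (e'.1 = k ∧ e'.2 = j))))
      (fun e' => e'.1 = j ∨ e'.1 = k ∨ e'.2 = j ∨ e'.2 = k) g]
    have hB2 : ∑ e' ∈ ((od.filter (fun e' => ¬((e'.1 = j ∧ e'.2 = k) ∨ (e'.1 = k ∧ e'.2 = j)))).filter
        (fun e' => ¬(e'.1 = j ∨ e'.1 = k ∨ e'.2 = j ∨ e'.2 = k))), g e' = 0 := by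
      apply Finset.sum_eq_zero
      intro e' he'
      simp only [Finset.mem_filter, hod, Finset.mem_offDiag, Finset.mem_univ, true_and] at he'
      obtain ⟨⟨hne, -⟩, hnsh⟩ := he'
      push_neg at hnsh
      obtain ⟨h1j, h1k, h2j, h2k⟩ := hnsh
      simp only [hg]
      rw [gr_E4 hq1 hp hjk (Ne.symm h1j) (Ne.symm h2j) (Ne.symm h1k) (Ne.symm h2k) hne]
      rw [sub_eq_zero, pow_two]
    rw [hB2, add_zero]
    have hB1 : ∀ e' ∈ ((od.filter (fun e' => ¬((e'.1 = j ∧ e'.2 = k) ∨ (e'.1 = k ∧ e'.2 = j)))).filter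
        (fun e' => e'.1 = j ∨ e'.1 = k ∨ e'.2 = j ∨ e'.2 = k)), g e' = S3 - t^2 := by
      intro e' he'
      simp only [Finset.mem_filter, hod, Finset.mem_offDiag, Finset.mem_univ, true_and] at he'
      obtain ⟨⟨hne, hnP1⟩, hsh⟩ := he'
      push_neg at hnP1
      simp only [hg]
      rw [gr_EZZ_share hq1 hp hjk hne (fun hh => (hnP1.1 hh.1) hh.2) (fun hh => (hnP1.2 hh.1) hh.2) hsh]
    rw [Finset.sum_congr rfl hB1, Finset.sum_const, nsmul_eq_mul]
    have hcard : (((od.filter (fun e' => ¬((e'.1 = j ∧ e'.2 = k) ∨ (e'.1 = k ∧ e'.2 = j)))).filter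
        (fun e' => e'.1 = j ∨ e'.1 = k ∨ e'.2 = j ∨ e'.2 = k)).card : ℝ) ≤ 4*((m:ℝ) - 2) := by
      have hsub : ((od.filter (fun e' => ¬((e'.1 = j ∧ e'.2 = k) ∨ (e'.1 = k ∧ e'.2 = j)))).filter
          (fun e' => e'.1 = j ∨ e'.1 = k ∨ e'.2 = j ∨ e'.2 = k))
          ⊆ (({j,k} : Finset (Fin m)) ×ˢ ({j,k}ᶜ : Finset (Fin m)))
            ∪ (({j,k}ᶜ : Finset (Fin m)) ×ˢ ({j,k} : Finset (Fin m))) := by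
        intro e' he'
        simp only [Finset.mem_filter, hod, Finset.mem_offDiag, Finset.mem_univ, true_and] at he'
        obtain ⟨⟨hne, hnP1⟩, hsh⟩ := he'
        push_neg at hnP1
        simp only [Finset.mem_union, Finset.mem_product, Finset.mem_compl,
          Finset.mem_insert, Finset.mem_singleton]
        by_cases h1 : e'.1 = j ∨ e'.1 = k <;> by_cases h2 : e'.2 = j ∨ e'.2 = k
        · -- both in {j,k} : contradiction with ¬P1 and ne
          exfalso
          rcases h1 with h1 | h1 <;> rcases h2 with h2 | h2
          · exact hne (h1.trans h2.symm)
          · exact (hnP1.1 h1) h2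
          · exact (hnP1.2 h1) h2
          · exact hne (h1.trans h2.symm)
        · exact Or.inl ⟨h1, fun hh => h2 hh⟩
        · exact Or.inr ⟨fun hh => h1 hh, h2⟩
        · exfalso; rcases hsh with hh|hh|hh|hh
          · exact h1 (Or.inl hh)
          · exact h1 (Or.inr hh)
          · exact h2 (Or.inl hh)
          · exact h2 (Or.inr hh)
      have hcard2 : (({j,k} : Finset (Fin m)) ×ˢ ({j,k}ᶜ : Finset (Fin m))
            ∪ ({j,k}ᶜ : Finset (Fin m)) ×ˢ ({j,k} : Finset (Fin m))).card ≤ 4*(m-2) := by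
        refine le_trans (Finset.card_union_le _ _) ?_
        rw [Finset.card_product, Finset.card_product]
        have hc2 : ({j,k} : Finset (Fin m)).card = 2 := by
          rw [Finset.card_insert_of_notMem (by simp [hjk]), Finset.card_singleton]
        have hcc : ({j,k}ᶜ : Finset (Fin m)).card = m - 2 := by
          rw [Finset.card_compl, hc2, Fintype.card_fin]
        rw [hc2, hcc]; omega
      calc (((od.filter (fun e' => ¬((e'.1 = j ∧ e'.2 = k) ∨ (e'.1 = k ∧ e'.2 = j)))).filter
            (fun e' => e'.1 = j ∨ e'.1 = k ∨ e'.2 = j ∨ e'.2 = k)).card : ℝ)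
          ≤ ((({j,k} : Finset (Fin m)) ×ˢ ({j,k}ᶜ : Finset (Fin m))
            ∪ ({j,k}ᶜ : Finset (Fin m)) ×ˢ ({j,k} : Finset (Fin m))).card : ℝ) := by
            exact_mod_cast Nat.cast_le.mpr (Finset.card_le_card hsub)
        _ ≤ ((4*(m-2) : ℕ) : ℝ) := by exact_mod_cast hcard2
        _ = 4*((m:ℝ) - 2) := by push_cast [Nat.cast_sub hm2]; ring
    have hnn : 0 ≤ S3 - t^2 := sub_nonneg.mpr hS
    exact mul_le_mul_of_nonneg_right hcard hnn
  linarith [hrest]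

end GR5

section GR6
variable {U : Type*} [Fintype U] {n m : ℕ}
  {q : U → ℝ} {h : U → Fin n} {p : Fin n → ℝ}
  (hq1 : ∑ u, q u = 1)
  (hp : ∀ i, p i = ∑ u ∈ Finset.univ.filter (fun u => h u = i), q u)

include hq1 hp

omit hp in
lemma gr_Etot : ∑ x : Fin m → U, (∏ j, q (x j)) = 1 := by
  rw [← Fintype.prod_sum (fun (_ : Fin m) (u : U) => q u)]
  simp [hq1]

lemma gr_EY (hm2 : 2 ≤ m) :
    ∑ x : Fin m → U, ((∏ j, q (x j)) *
        (∑ e ∈ (Finset.univ.offDiag : Finset (Fin m × Fin m)),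
          if h (x e.1) = h (x e.2) then (1:ℝ) else 0))
      = ((Finset.univ.offDiag : Finset (Fin m × Fin m)).card : ℝ) * (∑ i, p i * p i) := by
  have swap : ∑ x : Fin m → U, ((∏ j, q (x j)) *
        (∑ e ∈ (Finset.univ.offDiag : Finset (Fin m × Fin m)),
          if h (x e.1) = h (x e.2) then (1:ℝ) else 0))
      = ∑ e ∈ (Finset.univ.offDiag : Finset (Fin m × Fin m)),
          ∑ x : Fin m → U, ((∏ j, q (x j)) * if h (x e.1) = h (x e.2) then (1:ℝ) else 0) := by
    rw [Finset.sum_congr rfl fun x _ => Finset.mul_sum _ _ _, Finset.sum_comm]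
  rw [swap, Finset.sum_congr rfl (fun e he => gr_E2 hq1 hp
    (Finset.mem_offDiag.mp he).2.2), Finset.sum_const, nsmul_eq_mul]

lemma gr_EY2 (hm2 : 2 ≤ m)
    (hS : (∑ i, p i * p i)^2 ≤ ∑ i, p i * (p i * p i)) :
    ∑ x : Fin m → U, ((∏ j, q (x j)) *
        (∑ e ∈ (Finset.univ.offDiag : Finset (Fin m × Fin m)),
          if h (x e.1) = h (x e.2) then (1:ℝ) else 0)^2)
      ≤ (((Finset.univ.offDiag : Finset (Fin m × Fin m)).card : ℝ) * (∑ i, p i * p i))^2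
        + ((Finset.univ.offDiag : Finset (Fin m × Fin m)).card : ℝ) *
          (2*((∑ i, p i * p i) - (∑ i, p i * p i)^2)
            + 4*((m:ℝ) - 2)*((∑ i, p i * (p i * p i)) - (∑ i, p i * p i)^2)) := by
  classical
  set t : ℝ := ∑ i, p i * p i
  set S3 : ℝ := ∑ i, p i * (p i * p i)
  set od : Finset (Fin m × Fin m) := Finset.univ.offDiag with hod
  have swap : ∑ x : Fin m → U, ((∏ j, q (x j)) *
        (∑ e ∈ od, if h (x e.1) = h (x e.2) then (1:ℝ) else 0)^2)
      = ∑ e ∈ od, ∑ e' ∈ od, ∑ x : Fin m → U, ((∏ j, q (x j)) *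
          ((if h (x e.1) = h (x e.2) then (1:ℝ) else 0) *
            (if h (x e'.1) = h (x e'.2) then 1 else 0))) := by
    have pt : ∀ x : Fin m → U, (∏ j, q (x j)) *
          (∑ e ∈ od, if h (x e.1) = h (x e.2) then (1:ℝ) else 0)^2
        = ∑ e ∈ od, ∑ e' ∈ od, (∏ j, q (x j)) *
          ((if h (x e.1) = h (x e.2) then (1:ℝ) else 0) *
            (if h (x e'.1) = h (x e'.2) then 1 else 0)) := by
      intro x
      rw [pow_two, Finset.sum_mul_sum, Finset.mul_sum]
      exact Finset.sum_congr rfl fun e _ => by rw [Finset.mul_sum]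
    rw [Finset.sum_congr rfl fun x _ => pt x, Finset.sum_comm]
    refine Finset.sum_congr rfl fun e _ => ?_
    rw [Finset.sum_comm]
  rw [swap]
  have per : ∀ e ∈ od, ∑ e' ∈ od, ∑ x : Fin m → U, ((∏ j, q (x j)) *
          ((if h (x e.1) = h (x e.2) then (1:ℝ) else 0) *
            (if h (x e'.1) = h (x e'.2) then 1 else 0)))
      ≤ (od.card : ℝ) * t^2
        + (2*(t - t^2) + 4*((m:ℝ) - 2)*(S3 - t^2)) := by
    intro e he
    have hjk : e.1 ≠ e.2 := (Finset.mem_offDiag.mp he).2.2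
    have hb := gr_per_e hq1 hp hjk hm2 hS
    have expand : ∑ e' ∈ od, ∑ x : Fin m → U, ((∏ j, q (x j)) *
          ((if h (x e.1) = h (x e.2) then (1:ℝ) else 0) *
            (if h (x e'.1) = h (x e'.2) then 1 else 0)))
        = (∑ e' ∈ od, ((∑ x : Fin m → U, ((∏ j, q (x j)) *
          ((if h (x e.1) = h (x e.2) then (1:ℝ) else 0) *
            (if h (x e'.1) = h (x e'.2) then 1 else 0)))) - t^2)) + (od.card : ℝ) * t^2 := by
      rw [Finset.sum_sub_distrib, Finset.sum_const, nsmul_eq_mul]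
      ring
    rw [expand]
    linarith [hb]
  calc ∑ e ∈ od, ∑ e' ∈ od, ∑ x : Fin m → U, ((∏ j, q (x j)) *
          ((if h (x e.1) = h (x e.2) then (1:ℝ) else 0) *
            (if h (x e'.1) = h (x e'.2) then 1 else 0)))
      ≤ ∑ _e ∈ od, ((od.card : ℝ) * t^2
          + (2*(t - t^2) + 4*((m:ℝ) - 2)*(S3 - t^2))) := Finset.sum_le_sum per
    _ = ((od.card : ℝ) * t)^2 + (od.card : ℝ) *
          (2*(t - t^2) + 4*((m:ℝ) - 2)*(S3 - t^2)) := by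
        rw [Finset.sum_const, nsmul_eq_mul]; ring

end GR6

lemma gr_count {U : Type*} [Fintype U] {n m : ℕ} (h : U → Fin n) (x : Fin m → U) :
    ∑ i : Fin n, (kcount h x i : ℝ) * ((kcount h x i : ℝ) - 1)
      = ∑ e ∈ (Finset.univ.offDiag : Finset (Fin m × Fin m)),
          (if h (x e.1) = h (x e.2) then (1:ℝ) else 0) := by
  classical
  have hk : ∀ i, (kcount h x i : ℝ) = ∑ j, if h (x j) = i then (1:ℝ) else 0 := by
    intro i
    rw [kcount, Finset.card_filter]
    push_cast
    rfl
  have hsum1 : ∑ i : Fin n, (kcount h x i : ℝ) = m := by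
    rw [Finset.sum_congr rfl fun i _ => hk i, Finset.sum_comm]
    simp
  have hsum2 : ∑ i : Fin n, (kcount h x i : ℝ) * (kcount h x i : ℝ)
      = ∑ j : Fin m, ∑ j' : Fin m, if h (x j) = h (x j') then (1:ℝ) else 0 := by
    have e1 : ∀ i : Fin n, (kcount h x i : ℝ) * (kcount h x i : ℝ)
        = ∑ j : Fin m, ∑ j' : Fin m,
            (if h (x j) = i then (1:ℝ) else 0) * (if h (x j') = i then 1 else 0) := by
      intro i
      rw [hk i, Finset.sum_mul_sum]
    rw [Finset.sum_congr rfl fun i _ => e1 i, Finset.sum_comm]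
    refine Finset.sum_congr rfl fun j _ => ?_
    rw [Finset.sum_comm]
    exact Finset.sum_congr rfl fun j' _ => (gr_ind2 (h (x j)) (h (x j'))).symm
  have hdiag : ∑ e ∈ (Finset.univ.diag : Finset (Fin m × Fin m)),
      (if h (x e.1) = h (x e.2) then (1:ℝ) else 0) = m := by
    rw [Finset.sum_diag]
    simp
  have hunion : ∑ e ∈ (Finset.univ.diag : Finset (Fin m × Fin m)),
        (if h (x e.1) = h (x e.2) then (1:ℝ) else 0)
      + ∑ e ∈ (Finset.univ.offDiag : Finset (Fin m × Fin m)),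
        (if h (x e.1) = h (x e.2) then (1:ℝ) else 0)
      = ∑ j : Fin m, ∑ j' : Fin m, if h (x j) = h (x j') then (1:ℝ) else 0 := by
    rw [← Finset.sum_union (Finset.disjoint_diag_offDiag _), Finset.diag_union_offDiag,
      Finset.sum_product]
  have expand : ∑ i : Fin n, (kcount h x i : ℝ) * ((kcount h x i : ℝ) - 1)
      = ∑ i : Fin n, (kcount h x i : ℝ) * (kcount h x i : ℝ)
        - ∑ i : Fin n, (kcount h x i : ℝ) := by
    rw [← Finset.sum_sub_distrib]
    exact Finset.sum_congr rfl fun i _ => by ring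
  rw [expand, hsum1, hsum2, ← hunion, hdiag]
  ring


def grY {U : Type*} [Fintype U] {n m : ℕ} (h : U → Fin n) (x : Fin m → U) : ℝ :=
  ∑ e ∈ (Finset.univ.offDiag : Finset (Fin m × Fin m)),
    if h (x e.1) = h (x e.2) then (1:ℝ) else 0

lemma gr_count2 {U : Type*} [Fintype U] {n m : ℕ} (h : U → Fin n) (x : Fin m → U) :
    ∑ i : Fin n, (kcount h x i : ℝ) * ((kcount h x i : ℝ) - 1) = grY h x :=
  gr_count h x

lemma gr_N {m : ℕ} (hm2 : 2 ≤ m) :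
    (((Finset.univ.offDiag : Finset (Fin m × Fin m))).card : ℝ) = (m:ℝ) * ((m:ℝ) - 1) := by
  rw [Finset.offDiag_card]
  have hcu : (Finset.univ : Finset (Fin m)).card = m := by simp
  rw [hcu]
  have hmm : m ≤ m * m := Nat.le_mul_of_pos_left m (by omega)
  push_cast [Nat.cast_sub hmm]
  ring

section GR7
variable {U : Type*} [Fintype U] {n m : ℕ}
  {q : U → ℝ} {h : U → Fin n} {p : Fin n → ℝ}
  (hq1 : ∑ u, q u = 1)
  (hp : ∀ i, p i = ∑ u ∈ Finset.univ.filter (fun u => h u = i), q u)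

include hq1 hp

lemma gr_EYw (hm2 : 2 ≤ m) :
    ∑ x : Fin m → U, (∏ j, q (x j)) * grY h x
      = (m:ℝ) * ((m:ℝ) - 1) * (∑ i, p i * p i) := by
  unfold grY
  rw [gr_EY hq1 hp hm2, gr_N hm2]

lemma gr_EY2w (hm2 : 2 ≤ m)
    (hS : (∑ i, p i * p i)^2 ≤ ∑ i, p i * (p i * p i)) :
    ∑ x : Fin m → U, (∏ j, q (x j)) * (grY h x)^2
      ≤ ((m:ℝ) * ((m:ℝ) - 1) * (∑ i, p i * p i))^2
        + (m:ℝ) * ((m:ℝ) - 1) *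
          (2*((∑ i, p i * p i) - (∑ i, p i * p i)^2)
            + 4*((m:ℝ) - 2)*((∑ i, p i * (p i * p i)) - (∑ i, p i * p i)^2)) := by
  have hh := gr_EY2 hq1 hp hm2 hS
  rw [gr_N hm2] at hh
  exact hh

end GR7

set_option maxHeartbeats 1000000 in
theorem goldreich_ron'
    {U : Type*} [Fintype U] [Nonempty U]
    (n : ℕ) (hn : 1 ≤ n)
    (q : U → ℝ) (hq0 : ∀ u, 0 ≤ q u) (hq1 : ∑ u, q u = 1)
    (h : U → Fin n)
    (p : Fin n → ℝ)
    (hp : ∀ i, p i = ∑ u ∈ Finset.univ.filter (fun u => h u = i), q u)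
    (m : ℕ) (hm : 2 ≤ m)
    (β lam : ℝ) (hβ : 0 < β) (hlam : 0 ≤ lam)
    (hmn : (m : ℝ) = (n : ℝ) ^ ((1 : ℝ) / 2 + β + lam)) :
    1 - 4 / (9 * (n : ℝ) ^ lam)
      ≤ ∑ x : Fin m → U,
          ({x : Fin m → U | |(∑ i : Fin n, (kcount h x i : ℝ) * ((kcount h x i : ℝ) - 1)
              / ((m : ℝ) * ((m : ℝ) - 1))) * (1 / ∑ i : Fin n, p i ^ 2) - 1|
            ≤ 3 / (n : ℝ) ^ (β / 2)}.indicator (fun y => ∏ j, q (y j)) x) := by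
  classical
  -- basic positivity
  have hn0 : (0:ℝ) < n := by exact_mod_cast hn
  have hn1R : (1:ℝ) ≤ n := by exact_mod_cast hn
  have hM2 : (2:ℝ) ≤ (m:ℝ) := by exact_mod_cast hm
  set r : ℝ := (n:ℝ) ^ ((1:ℝ)/2) with hrdef
  set X : ℝ := (n:ℝ) ^ β with hXdef
  set L : ℝ := (n:ℝ) ^ lam with hLdef
  have hr0 : 0 < r := Real.rpow_pos_of_pos hn0 _
  have hX0 : 0 < X := Real.rpow_pos_of_pos hn0 _
  have hL0 : 0 < L := Real.rpow_pos_of_pos hn0 _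
  have hX1 : 1 ≤ X := Real.one_le_rpow hn1R hβ.le
  have hL1 : 1 ≤ L := Real.one_le_rpow hn1R hlam
  have hrr : r * r = (n:ℝ) := by
    rw [hrdef, ← Real.rpow_add hn0]; norm_num
  have hM : (m:ℝ) = r * X * L := by
    rw [hmn, Real.rpow_add hn0, Real.rpow_add hn0, hrdef, hXdef, hLdef]
  set M : ℝ := (m:ℝ) with hMdef
  -- facts about p
  set t : ℝ := ∑ i, p i * p i with htdef
  set S3 : ℝ := ∑ i, p i * (p i * p i) with hS3def
  have hp0 : ∀ i, 0 ≤ p i := fun i => (hp i) ▸ Finset.sum_nonneg (fun u _ => hq0 u)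
  have hp1 : ∑ i, p i = 1 := by
    rw [Finset.sum_congr rfl fun i _ => hp i]
    exact (Finset.sum_fiberwise_of_maps_to (fun u _ => Finset.mem_univ (h u)) q).trans hq1
  have hts : ∑ i, p i ^ 2 = t := Finset.sum_congr rfl fun i _ => by rw [pow_two]
  have hnt : 1 ≤ (n:ℝ) * t := by
    have := sq_sum_le_card_mul_sum_sq (s := (Finset.univ : Finset (Fin n))) (f := p)
    rw [hp1, hts] at this
    simpa using this
  have ht0 : 0 < t := by nlinarith
  have hS : t^2 ≤ S3 := by
    have cs := Finset.sum_mul_sq_le_sq_mul_sq (Finset.univ : Finset (Fin n))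
      (fun i => Real.sqrt (p i)) (fun i => p i * Real.sqrt (p i))
    have e1 : ∀ i : Fin n, Real.sqrt (p i) * (p i * Real.sqrt (p i)) = p i * p i := by
      intro i
      rw [show Real.sqrt (p i) * (p i * Real.sqrt (p i))
          = (Real.sqrt (p i) * Real.sqrt (p i)) * p i by ring, Real.mul_self_sqrt (hp0 i)]
    have e2 : ∀ i : Fin n, Real.sqrt (p i) ^ 2 = p i := fun i => Real.sq_sqrt (hp0 i)
    have e3 : ∀ i : Fin n, (p i * Real.sqrt (p i)) ^ 2 = p i * (p i * p i) := by
      intro i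
      rw [mul_pow, Real.sq_sqrt (hp0 i), pow_two]; ring
    rw [Finset.sum_congr rfl fun i _ => e1 i, Finset.sum_congr rfl fun i _ => e2 i,
      Finset.sum_congr rfl fun i _ => e3 i, hp1, one_mul] at cs
    exact cs
  have hSraw : (∑ i, p i * p i)^2 ≤ ∑ i, p i * (p i * p i) := by
    rw [← htdef, ← hS3def]; exact hS
  -- the key inequality : S3 - t^2 ≤ r * t^2 / 2
  have hkey : S3 - t^2 ≤ r * t^2 / 2 := by
    have hne : Nonempty (Fin n) := ⟨⟨0, by omega⟩⟩
    obtain ⟨i₀, -, hmax⟩ := Finset.exists_max_image (Finset.univ : Finset (Fin n)) p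
      Finset.univ_nonempty
    set a : ℝ := p i₀ with hadef
    have ha0 : 0 ≤ a := hp0 i₀
    have ha1 : a ≤ 1 := hp1 ▸ Finset.single_le_sum (fun i _ => hp0 i) (Finset.mem_univ i₀)
    have hS3a : S3 ≤ a * t := by
      rw [hS3def, htdef, Finset.mul_sum]
      exact Finset.sum_le_sum fun i _ =>
        mul_le_mul_of_nonneg_right (hmax i (Finset.mem_univ i)) (mul_self_nonneg (p i))
    have hta : a * a ≤ t :=
      Finset.single_le_sum (f := fun i => p i * p i)
        (fun i _ => mul_self_nonneg (p i)) (Finset.mem_univ i₀)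
    have herase : a * a + ∑ i ∈ Finset.univ.erase i₀, p i * p i = t :=
      (Finset.add_sum_erase _ (fun i => p i * p i) (Finset.mem_univ i₀)).trans htdef.symm
    have hsum_erase : a + ∑ i ∈ Finset.univ.erase i₀, p i = 1 := by
      rw [Finset.add_sum_erase _ _ (Finset.mem_univ i₀), hp1]
    have hCS2 : (1 - a)^2 ≤ (n:ℝ) * ∑ i ∈ Finset.univ.erase i₀, p i * p i := by
      have cs := sq_sum_le_card_mul_sum_sq (s := Finset.univ.erase i₀) (f := p)
      have hcard : ((Finset.univ.erase i₀).card : ℝ) ≤ (n:ℝ) := by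
        have : (Finset.univ.erase i₀).card ≤ n := by
          refine le_trans (Finset.card_le_card (Finset.erase_subset _ _)) ?_
          simp
        exact_mod_cast this
      have hsq : ∑ i ∈ Finset.univ.erase i₀, p i ^ 2 = ∑ i ∈ Finset.univ.erase i₀, p i * p i :=
        Finset.sum_congr rfl fun i _ => by rw [pow_two]
      rw [hsq] at cs
      have h1a : ∑ i ∈ Finset.univ.erase i₀, p i = 1 - a := by linarith
      rw [h1a] at cs
      calc (1-a)^2 ≤ ((Finset.univ.erase i₀).card : ℝ)
            * ∑ i ∈ Finset.univ.erase i₀, p i * p i := cs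
        _ ≤ (n:ℝ) * ∑ i ∈ Finset.univ.erase i₀, p i * p i := by
            refine mul_le_mul_of_nonneg_right hcard ?_
            exact Finset.sum_nonneg fun i _ => mul_self_nonneg (p i)
    have h2a : 2 * a * (1 - a) ≤ r * t := by
      have hsq2 : 2*(r*a)*(1-a) ≤ (r*a)^2 + (1-a)^2 := two_mul_le_add_sq _ _
      have hrt : (1-a)^2 ≤ r * r * ∑ i ∈ Finset.univ.erase i₀, p i * p i := by
        rw [hrr]; exact hCS2
      have : r * (2*a*(1-a)) ≤ r * (r * t) := by
        have expand : r * (r*t) = (r*a)^2 + r*r*(∑ i ∈ Finset.univ.erase i₀, p i * p i) := by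
          rw [← herase]; ring
        nlinarith [hsq2, hrt]
      exact le_of_mul_le_mul_left this hr0
    nlinarith [hS3a, hta, h2a, ht0.le, mul_le_mul_of_nonneg_left h2a ht0.le]
  clear_value r X L M t S3
  -- abbreviations
  have hw0 : ∀ x : Fin m → U, 0 ≤ ∏ j, q (x j) :=
    fun x => Finset.prod_nonneg fun j _ => hq0 (x j)
  have hM1 : (1:ℝ) ≤ M - 1 := by rw [hMdef]; linarith
  set c : ℝ := M * (M - 1) * t with hcdef
  have hc0 : 0 < c := by
    rw [hcdef]
    exact mul_pos (mul_pos (by linarith : (0:ℝ) < M) (by linarith : (0:ℝ) < M - 1)) ht0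
  -- collision estimate in terms of grY
  have cE : ∀ x : Fin m → U,
      (∑ i : Fin n, (kcount h x i : ℝ) * ((kcount h x i : ℝ) - 1) / (M * (M - 1)))
        * (1 / ∑ i : Fin n, p i ^ 2) = grY h x / c := by
    intro x
    rw [← Finset.sum_div, gr_count2 h x, hts, hcdef]
    have hMne : M ≠ 0 := by intro hh; rw [hh] at hM2; linarith
    have hM1ne : M - 1 ≠ 0 := by intro hh; nlinarith
    field_simp
  -- ε²
  have heps2 : ((3:ℝ) / (n:ℝ) ^ (β/2))^2 = 9 / X := by
    rw [div_pow, hXdef]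
    congr 1
    · norm_num
    · rw [pow_two, ← Real.rpow_add hn0]; ring_nf
  -- rewrite the indicator sum
  have hPr : ∑ x : Fin m → U,
      ({x : Fin m → U | |(∑ i : Fin n, (kcount h x i : ℝ) * ((kcount h x i : ℝ) - 1)
          / (M * (M - 1))) * (1 / ∑ i : Fin n, p i ^ 2) - 1|
        ≤ 3 / (n : ℝ) ^ (β / 2)}.indicator (fun y => ∏ j, q (y j)) x)
      = ∑ x : Fin m → U, (if |grY h x / c - 1| ≤ 3 / (n:ℝ) ^ (β/2)
          then ∏ j, q (x j) else 0) := by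
    refine Finset.sum_congr rfl fun x _ => ?_
    rw [Set.indicator_apply]
    congr 1
    simp only [Set.mem_setOf_eq, cE x]
  rw [hPr]
  -- complementary event
  have hsplit : ∑ x : Fin m → U, (if |grY h x / c - 1| ≤ 3 / (n:ℝ) ^ (β/2)
        then ∏ j, q (x j) else 0)
      = 1 - ∑ x : Fin m → U,
          (if ¬(|grY h x / c - 1| ≤ 3 / (n:ℝ) ^ (β/2)) then ∏ j, q (x j) else 0) := by
    rw [eq_sub_iff_add_eq, ← Finset.sum_add_distrib]
    have hsum : ∀ x : Fin m → U,
        (if |grY h x / c - 1| ≤ 3 / (n:ℝ) ^ (β/2) then ∏ j, q (x j) else 0)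
          + (if ¬(|grY h x / c - 1| ≤ 3 / (n:ℝ) ^ (β/2)) then ∏ j, q (x j) else 0)
        = ∏ j, q (x j) := by
      intro x
      by_cases hx : |grY h x / c - 1| ≤ 3 / (n:ℝ) ^ (β/2) <;> simp [hx]
    rw [Finset.sum_congr rfl fun x _ => hsum x]
    exact gr_Etot (m := m) hq1
  rw [hsplit]
  -- Chebyshev bound on the bad event
  have hcheb : ∑ x : Fin m → U,
        (if ¬(|grY h x / c - 1| ≤ 3 / (n:ℝ) ^ (β/2)) then ∏ j, q (x j) else 0)
      ≤ ∑ x : Fin m → U, (X/9) * ((∏ j, q (x j)) * (grY h x / c - 1)^2) := by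
    refine Finset.sum_le_sum fun x _ => ?_
    by_cases hx : |grY h x / c - 1| ≤ 3 / (n:ℝ) ^ (β/2)
    · rw [if_neg (by exact fun hh => hh hx)]
      have hX9 : (0:ℝ) ≤ X/9 := by linarith only [hX0]
      exact mul_nonneg hX9 (mul_nonneg (hw0 x) (sq_nonneg _))
    · rw [if_pos hx]
      have habs : 3 / (n:ℝ) ^ (β/2) ≤ |grY h x / c - 1| := le_of_not_ge hx
      have heps0 : 0 ≤ (3:ℝ) / (n:ℝ) ^ (β/2) := by positivity
      have hsq : 9 / X ≤ (grY h x / c - 1)^2 := by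
        rw [← heps2, ← sq_abs (grY h x / c - 1)]
        exact pow_le_pow_left₀ heps0 habs 2
      have h1le : 1 ≤ (X/9) * (grY h x / c - 1)^2 := by
        have := mul_le_mul_of_nonneg_left hsq (le_of_lt (by linarith only [hX0] : (0:ℝ) < X/9))
        have hXne : X ≠ 0 := ne_of_gt hX0
        calc (1:ℝ) = (X/9) * (9/X) := by field_simp
          _ ≤ (X/9) * (grY h x / c - 1)^2 := this
      calc (∏ j, q (x j)) = (∏ j, q (x j)) * 1 := by ring
        _ ≤ (∏ j, q (x j)) * ((X/9) * (grY h x / c - 1)^2) :=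
            mul_le_mul_of_nonneg_left h1le (hw0 x)
        _ = (X/9) * ((∏ j, q (x j)) * (grY h x / c - 1)^2) := by ring
  -- second moment computation
  set B : ℝ := 2*(t - t^2) + 4*(M - 2)*(S3 - t^2) with hBdef
  have hvar : ∑ x : Fin m → U, (∏ j, q (x j)) * (grY h x / c - 1)^2
      ≤ B / (M * (M-1) * t^2) := by
    have hcne : c ≠ 0 := ne_of_gt hc0
    have htne : t ≠ 0 := ne_of_gt ht0
    have hexp : ∀ x : Fin m → U, (∏ j, q (x j)) * (grY h x / c - 1)^2
        = ((∏ j, q (x j)) * (grY h x)^2) * (1/c^2) - ((∏ j, q (x j)) * grY h x) * (2/c)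
          + (∏ j, q (x j)) := by
      intro x; field_simp; ring
    rw [Finset.sum_congr rfl fun x _ => hexp x]
    rw [Finset.sum_add_distrib, Finset.sum_sub_distrib, ← Finset.sum_mul, ← Finset.sum_mul]
    have hEY : ∑ x : Fin m → U, (∏ j, q (x j)) * grY h x = M * (M-1) * t := by
      have hh := gr_EYw hq1 hp hm
      rw [← htdef, ← hMdef] at hh
      exact hh
    have hEY2 : ∑ x : Fin m → U, (∏ j, q (x j)) * (grY h x)^2
        ≤ (M * (M-1) * t)^2 + M * (M-1) * B := by
      have hh := gr_EY2w hq1 hp hm hSraw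
      rw [← htdef, ← hS3def, ← hMdef, ← hBdef] at hh
      exact hh
    have hEtot : ∑ x : Fin m → U, (∏ j, q (x j)) = 1 := gr_Etot hq1
    rw [hEY, hEtot]
    have hstep : (∑ x : Fin m → U, (∏ j, q (x j)) * (grY h x)^2) * (1/c^2)
        ≤ ((M * (M-1) * t)^2 + M * (M-1) * B) * (1/c^2) :=
      mul_le_mul_of_nonneg_right hEY2 (by positivity)
    have hMM0 : 0 < M * (M-1) := mul_pos (by linarith only [hM2]) (by linarith only [hM1])
    have hMMne : M * (M-1) ≠ 0 := ne_of_gt hMM0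
    have hfinal : ((M * (M-1) * t)^2 + M * (M-1) * B) * (1/c^2) - (M * (M-1) * t) * (2/c) + 1
        = B / (M * (M-1) * t^2) := by
      rw [hcdef]
      field_simp
      ring
    linarith only [hstep, hfinal]
  -- final numeric inequality
  have hMrt : 1 ≤ M * r * t := by
    have hMr : M * r = (n:ℝ) * (X * L) := by rw [hM, ← hrr]; ring
    rw [hMr]
    have hXL : 1 ≤ X * L := by
      have h12 : (1:ℝ)*1 ≤ X*L := mul_le_mul hX1 hL1 zero_le_one (by linarith only [hX1])
      linarith only [h12]
    calc (1:ℝ) = 1 * 1 := by ring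
      _ ≤ ((n:ℝ) * t) * (X * L) := mul_le_mul hnt hXL zero_le_one (by linarith only [hnt])
      _ = (n:ℝ) * (X * L) * t := by ring
  have hB4 : B ≤ 4*(M-1)*r*t^2 := by
    have h1 : 4*(M-2)*(S3 - t^2) ≤ 4*(M-2)*(r*t^2/2) := by
      have hM2' : (0:ℝ) ≤ M - 2 := by linarith only [hM2]
      nlinarith [hkey, hM2']
    have h2 : t ≤ (M*r*t)*t := by
      have := mul_le_mul_of_nonneg_right hMrt ht0.le
      linarith only [this]
    rw [hBdef]
    linarith only [h1, h2, sq_nonneg t]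
  have hMM0 : 0 < M * (M-1) := mul_pos (by linarith only [hM2]) (by linarith only [hM1])
  have hnum : (X/9) * (B / (M * (M-1) * t^2)) ≤ 4 / (9 * L) := by
    have hD1 : (0:ℝ) < 9*(M * (M-1) * t^2) := by
      have := mul_pos hMM0 (pow_pos ht0 2)
      linarith only [this]
    have hD2 : (0:ℝ) < 9*L := by linarith only [hL0]
    rw [div_mul_div_comm, div_le_div_iff₀ hD1 hD2]
    have hXLB : X * L * B ≤ 4 * (M * (M-1) * t^2) := by
      calc X * L * B ≤ X * L * (4*(M-1)*r*t^2) :=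
            mul_le_mul_of_nonneg_left hB4
              (mul_nonneg (le_of_lt hX0) (le_of_lt hL0))
        _ = 4*(M-1)*t^2*(r*X*L) := by ring
        _ = 4*(M-1)*t^2*M := by rw [← hM]
        _ = 4 * (M * (M-1) * t^2) := by ring
    linarith only [hXLB]
  have hchain : ∑ x : Fin m → U,
        (if ¬(|grY h x / c - 1| ≤ 3 / (n:ℝ) ^ (β/2)) then ∏ j, q (x j) else 0)
      ≤ 4 / (9 * L) := by
    calc ∑ x : Fin m → U,
          (if ¬(|grY h x / c - 1| ≤ 3 / (n:ℝ) ^ (β/2)) then ∏ j, q (x j) else 0)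
        ≤ ∑ x : Fin m → U, (X/9) * ((∏ j, q (x j)) * (grY h x / c - 1)^2) := hcheb
      _ = (X/9) * ∑ x : Fin m → U, (∏ j, q (x j)) * (grY h x / c - 1)^2 := by
          rw [Finset.mul_sum]
      _ ≤ (X/9) * (B / (M * (M-1) * t^2)) :=
          mul_le_mul_of_nonneg_left hvar (by linarith only [hX0])
      _ ≤ 4 / (9 * L) := hnum
  linarith only [hchain]

/-- Goldreich–Ron: For all `β > 0` and `λ ≥ 0`, if `m = n^(1/2 + β + λ)`,
then with probability at least `1 − 4/(9 n^λ)` over a sequence `x` of `m` independent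
keys, the empirical collision probability estimates the collision probability
`‖p‖² = ∑ i, p i ^ 2` within relative error `3 / n^(β/2)`. -/
theorem goldreich_ron
    {U : Type*} [Fintype U] [Nonempty U]
    (n : ℕ) (hn : 1 ≤ n)
    (q : U → ℝ) (hq0 : ∀ u, 0 ≤ q u) (hq1 : ∑ u, q u = 1)
    (h : U → Fin n)
    (p : Fin n → ℝ)
    (hp : ∀ i, p i = ∑ u ∈ Finset.univ.filter (fun u => h u = i), q u)
    (m : ℕ) (hm : 2 ≤ m)
    (β lam : ℝ) (hβ : 0 < β) (hlam : 0 ≤ lam)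
    (hmn : (m : ℝ) = (n : ℝ) ^ ((1 : ℝ) / 2 + β + lam)) :
    1 - 4 / (9 * (n : ℝ) ^ lam)
      ≤ Pr q {x : Fin m → U |
          |collEst h x * (1 / ∑ i : Fin n, p i ^ 2) - 1| ≤ 3 / (n : ℝ) ^ (β / 2)} := by
  have key := goldreich_ron' n hn q hq0 hq1 h p hp m hm β lam hβ hlam hmn
  unfold Pr collEst
  exact key
end

section
/- For all n > 24, 0 < ε < 1/3, δ > 0, and s > 0, if m = ε^{-2} n^{1+δ}, then P{ |∑_{i=1}^n k_i(x)(k_i(x)−1)/(m(m−1)) · 1/‖p‖² − 1| ≤ ε(3 + 6s/n^{δ/2} + 5s²ε/n^{δ}) } ≥ 1 − (10/9) e^{−s²/4}, where x ∈ U^m is drawn from the product measure. -/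
namespace CollisionEstimator

variable {U : Type*} [Fintype U]

section Expectation

variable {ι κ β : Type*} [Fintype ι] [Fintype κ] [Fintype β] [DecidableEq ι] [DecidableEq κ]
  [DecidableEq β] (q : U → ℝ)

noncomputable def piExpect (f : (ι → U) → ℝ) : ℝ :=
  ∑ x, (∏ i, q (x i)) * f x

theorem Pr_eq_piExpect_indicator {m : ℕ} (S : Set (Fin m → U)) :
    Pr q S = piExpect q (S.indicator 1) := by
  unfold Pr piExpect
  refine Finset.sum_congr rfl fun x _ => ?_
  by_cases hx : x ∈ S <;> simp [hx]

variable {q}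

theorem piExpect_mono (hq0 : ∀ u, 0 ≤ q u) {f g : (ι → U) → ℝ} (hfg : ∀ x, f x ≤ g x) :
    piExpect q f ≤ piExpect q g :=
  Finset.sum_le_sum fun x _ =>
    mul_le_mul_of_nonneg_left (hfg x) (Finset.prod_nonneg fun i _ => hq0 (x i))

theorem piExpect_add (f g : (ι → U) → ℝ) :
    piExpect q (f + g) = piExpect q f + piExpect q g := by
  simp only [piExpect, Pi.add_apply, mul_add, Finset.sum_add_distrib]

theorem piExpect_const_mul (c : ℝ) (f : (ι → U) → ℝ) :
    piExpect q (fun x => c * f x) = c * piExpect q f := by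
  simp only [piExpect, Finset.mul_sum]
  exact Finset.sum_congr rfl fun _ _ => by ring

theorem piExpect_sum {γ : Type*} (s : Finset γ) (G : γ → (ι → U) → ℝ) :
    piExpect q (fun x => ∑ c ∈ s, G c x) = ∑ c ∈ s, piExpect q (G c) := by
  simp only [piExpect, Finset.mul_sum]
  exact Finset.sum_comm

theorem piExpect_const (hq1 : ∑ u, q u = 1) (c : ℝ) :
    piExpect q (fun _ : ι → U => c) = c := by
  rw [piExpect, ← Finset.sum_mul, ← Fintype.prod_sum (fun _ : ι => q), hq1,
    Finset.prod_const_one, one_mul]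

theorem piExpect_comp_equiv (e : κ ≃ ι) (F : (κ → U) → ℝ) :
    piExpect q (fun x : ι → U => F (x ∘ e)) = piExpect q F := by
  refine Fintype.sum_equiv (e.arrowCongr (Equiv.refl U)).symm _ _ fun x => ?_
  simp [Equiv.arrowCongr, Function.comp_def, Equiv.prod_comp e (fun i => q (x i))]

theorem piExpect_comp_inl (hq1 : ∑ u, q u = 1) (F : (κ → U) → ℝ) :
    piExpect q (fun y : κ ⊕ β → U => F (y ∘ Sum.inl)) = piExpect q F := by
  rw [piExpect, ← (Equiv.sumArrowEquivProdArrow κ β U).symm.sum_comp, Fintype.sum_prod_type]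
  refine Finset.sum_congr rfl fun a _ => ?_
  have hrest := piExpect_const (ι := β) hq1 1
  simp only [piExpect, mul_one] at hrest
  have hinl (b : β → U) : (Equiv.sumArrowEquivProdArrow κ β U).symm (a, b) ∘ Sum.inl = a := rfl
  simp only [Fintype.prod_sum_type, Equiv.sumArrowEquivProdArrow_symm_apply_inl,
    Equiv.sumArrowEquivProdArrow_symm_apply_inr, hinl]
  rw [← Finset.sum_mul, ← Finset.mul_sum, hrest, mul_one]

theorem piExpect_prod_blocks (g : (β → U) → ℝ) :
    piExpect q (fun z : κ × β → U => ∏ k, g (fun b => z (k, b)))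
      = piExpect q g ^ Fintype.card κ := by
  rw [piExpect, ← (Equiv.curry κ β U).symm.sum_comp]
  simp only [Equiv.curry_symm_apply, Fintype.prod_prod_type, Function.uncurry_apply_pair,
    ← Finset.prod_mul_distrib]
  rw [← Fintype.prod_sum (fun (_ : κ) (w : β → U) => (∏ b, q (w b)) * g w), piExpect,
    Finset.prod_const, Finset.card_univ]

theorem piExpect_fin_two (F : (Fin 2 → U) → ℝ) :
    piExpect q F = ∑ u, ∑ v, q u * q v * F ![u, v] := by
  rw [piExpect, ← (piFinTwoEquiv fun _ => U).symm.sum_comp, Fintype.sum_prod_type]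
  simp only [piFinTwoEquiv_symm_apply, Fin.prod_univ_two, Fin.cons_zero, Fin.cons_one]
  rfl

end Expectation

section Counting

variable {n m : ℕ} (h : U → Fin n)

def collide (u v : U) : ℝ := if h u = h v then 1 else 0

variable (x : Fin m → U)

theorem sum_comp_hash_eq_sum_kcount_mul (G : Fin n → ℝ) :
    ∑ j, G (h (x j)) = ∑ i, (kcount h x i : ℝ) * G i := by
  rw [← Finset.sum_fiberwise Finset.univ (fun j => h (x j))]
  refine Finset.sum_congr rfl fun i _ => ?_
  rw [Finset.sum_congr rfl fun j hj => by rw [(Finset.mem_filter.mp hj).2], Finset.sum_const,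
    kcount, nsmul_eq_mul]

theorem sum_kcount : ∑ i, (kcount h x i : ℝ) = m := by
  simpa using (sum_comp_hash_eq_sum_kcount_mul h x fun _ => 1).symm

theorem sum_collide_offDiag :
    ∑ p ∈ Finset.univ.offDiag, collide h (x p.1) (x p.2)
      = ∑ i, (kcount h x i : ℝ) * ((kcount h x i : ℝ) - 1) := by
  have hrow (j : Fin m) : ∑ j', collide h (x j) (x j') = kcount h x (h (x j)) := by
    simp only [collide, kcount, eq_comm (a := h (x j))]
    exact_mod_cast Finset.sum_boole _ _
  have hall : ∑ p : Fin m × Fin m, collide h (x p.1) (x p.2)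
      = ∑ i, (kcount h x i : ℝ) * kcount h x i := by
    rw [Fintype.sum_prod_type, Finset.sum_congr rfl fun j _ => hrow j]
    exact sum_comp_hash_eq_sum_kcount_mul h x fun i => (kcount h x i : ℝ)
  have hdiag : ∑ p ∈ (Finset.univ : Finset (Fin m)).diag, collide h (x p.1) (x p.2) = m := by
    rw [Finset.sum_diag]
    simp [collide]
  rw [← Finset.univ_product_univ, ← Finset.diag_union_offDiag,
    Finset.sum_union (Finset.disjoint_diag_offDiag _), hdiag] at hall
  simp only [mul_sub, mul_one, Finset.sum_sub_distrib, sum_kcount]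
  linarith

theorem collEst_eq_sum_collide_offDiag :
    collEst h x = (∑ p ∈ Finset.univ.offDiag, collide h (x p.1) (x p.2)) / (m * (m - 1)) := by
  rw [collEst, sum_collide_offDiag, Finset.sum_div]

theorem natCast_mul_natCast_sub_one_nonneg (k : ℕ) : 0 ≤ (k : ℝ) * (k - 1) := by
  rcases k with _ | k
  · simp
  · simp only [Nat.cast_add_one, add_sub_cancel_right]; positivity

theorem collEst_nonneg : 0 ≤ collEst h x :=
  Finset.sum_nonneg fun _ _ =>
    div_nonneg (natCast_mul_natCast_sub_one_nonneg _) (natCast_mul_natCast_sub_one_nonneg m)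

end Counting

section Permutations

variable {α : Type*} [Fintype α] [DecidableEq α]

theorem sum_perm_apply_pair_eq (F : α → α → ℝ) {a b a' b' : α} (hab : a ≠ b) (hab' : a' ≠ b') :
    ∑ σ : Equiv.Perm α, F (σ a) (σ b) = ∑ σ : Equiv.Perm α, F (σ a') (σ b') := by
  obtain ⟨τ, hτa, hτb⟩ :=
    MulAction.is_two_pretransitive_iff.mp (Equiv.Perm.isMultiplyPretransitive α 2) hab' hab
  rw [Equiv.Perm.smul_def] at hτa hτb
  refine Fintype.sum_equiv (Equiv.mulRight τ) _ _ fun σ => ?_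
  simp [hτa, hτb]

theorem card_offDiag_mul_sum_perm_apply (F : α → α → ℝ) {a b : α} (hab : a ≠ b) :
    ((Finset.univ : Finset α).offDiag.card : ℝ) * ∑ σ : Equiv.Perm α, F (σ a) (σ b)
      = (Fintype.card (Equiv.Perm α) : ℝ) * ∑ p ∈ Finset.univ.offDiag, F p.1 p.2 := by
  have hinv (σ : Equiv.Perm α) :
      ∑ p ∈ Finset.univ.offDiag, F (σ p.1) (σ p.2) = ∑ p ∈ Finset.univ.offDiag, F p.1 p.2 :=
    Finset.sum_equiv (σ.prodCongr σ) (by simp) fun _ _ => rfl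
  calc ((Finset.univ : Finset α).offDiag.card : ℝ) * ∑ σ : Equiv.Perm α, F (σ a) (σ b)
      = ∑ p ∈ Finset.univ.offDiag, ∑ σ : Equiv.Perm α, F (σ p.1) (σ p.2) := by
        rw [Finset.sum_congr rfl fun p hp =>
          sum_perm_apply_pair_eq F (Finset.mem_offDiag.mp hp).2.2 hab, Finset.sum_const,
          nsmul_eq_mul]
    _ = _ := by
        rw [Finset.sum_comm, Finset.sum_congr rfl fun σ _ => hinv σ, Finset.sum_const,
          nsmul_eq_mul, Finset.card_univ]

end Permutations

section Pairing

variable {n m : ℕ} (h : U → Fin n)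

/-- `(r, b) ↦ 2r + b`; when `m` is odd the last position is left unpaired. -/
def pairEquiv (m : ℕ) : (Fin (m / 2) × Fin 2) ⊕ Fin (m % 2) ≃ Fin m :=
  (finProdFinEquiv.sumCongr (Equiv.refl _)).trans
    (finSumFinEquiv.trans (finCongr (Nat.div_add_mod' m 2)))

def pairCollisions {N : ℕ} (z : Fin N × Fin 2 → U) : ℝ :=
  ∑ r, collide h (z (r, 0)) (z (r, 1))

theorem sum_perm_collide_eq (x : Fin m → U) {a b : Fin m} (hab : a ≠ b) :
    ∑ σ : Equiv.Perm (Fin m), collide h (x (σ a)) (x (σ b)) = m.factorial * collEst h x := by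
  have hm : (2 : ℝ) ≤ m := by
    have := a.isLt; have := b.isLt; have := Fin.val_ne_of_ne hab
    exact_mod_cast (show 2 ≤ m by omega)
  have key := card_offDiag_mul_sum_perm_apply (fun j j' => collide h (x j) (x j')) hab
  rw [Finset.offDiag_card, Finset.card_univ, Fintype.card_perm, Fintype.card_fin,
    Nat.cast_sub (Nat.le_mul_self m), Nat.cast_mul] at key
  rw [collEst_eq_sum_collide_offDiag, mul_div_assoc', eq_div_iff (by nlinarith)]
  linear_combination key

theorem sum_perm_pairCollisions (x : Fin m → U) :
    ∑ σ : Equiv.Perm (Fin m), pairCollisions h (x ∘ (pairEquiv m).trans σ ∘ Sum.inl)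
      = (m / 2 : ℕ) * m.factorial * collEst h x := by
  have hne (r : Fin (m / 2)) : pairEquiv m (.inl (r, 0)) ≠ pairEquiv m (.inl (r, 1)) :=
    (pairEquiv m).injective.ne (by simp)
  simp only [pairCollisions, Function.comp_apply, Equiv.trans_apply]
  rw [Finset.sum_comm, Finset.sum_congr rfl fun r _ => sum_perm_collide_eq h x (hne r),
    Finset.sum_const, Finset.card_univ, Fintype.card_fin, nsmul_eq_mul, mul_assoc]

theorem exp_mul_collEst_le (hm : 2 ≤ m) (x : Fin m → U) (θ : ℝ) :
    Real.exp (θ * collEst h x) ≤ (m.factorial : ℝ)⁻¹ * ∑ σ : Equiv.Perm (Fin m),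
      Real.exp (θ / (m / 2 : ℕ) * pairCollisions h (x ∘ (pairEquiv m).trans σ ∘ Sum.inl)) := by
  have hN : ((m / 2 : ℕ) : ℝ) ≠ 0 := Nat.cast_ne_zero.mpr (by omega)
  have hfac : (m.factorial : ℝ) ≠ 0 := by positivity
  have hjensen := convexOn_exp.map_sum_le (t := Finset.univ) (w := fun _ => (m.factorial : ℝ)⁻¹)
    (p := fun σ : Equiv.Perm (Fin m) =>
      θ / (m / 2 : ℕ) * pairCollisions h (x ∘ (pairEquiv m).trans σ ∘ Sum.inl))
    (fun _ _ => by positivity)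
    (by simp [Finset.card_univ, Fintype.card_perm, hfac])
    (fun _ _ => Set.mem_univ _)
  simp only [smul_eq_mul, ← Finset.mul_sum, sum_perm_pairCollisions] at hjensen
  rwa [show (m.factorial : ℝ)⁻¹ * (θ / (m / 2 : ℕ) * ((m / 2 : ℕ) * m.factorial * collEst h x))
    = θ * collEst h x by field_simp] at hjensen

end Pairing

section MomentGenerating

variable {n m : ℕ} {q : U → ℝ} (h : U → Fin n)

theorem piExpect_exp_pairCollisions {N : ℕ} (a : ℝ) :
    piExpect q (fun z : Fin N × Fin 2 → U => Real.exp (a * pairCollisions h z))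
      = piExpect q (fun w : Fin 2 → U => Real.exp (a * collide h (w 0) (w 1))) ^ N := by
  simp only [pairCollisions, Finset.mul_sum, Real.exp_sum]
  exact (piExpect_prod_blocks fun w : Fin 2 → U => Real.exp (a * collide h (w 0) (w 1))).trans
    (by rw [Fintype.card_fin])

theorem piExpect_exp_collEst_le (hq0 : ∀ u, 0 ≤ q u) (hq1 : ∑ u, q u = 1) (hm : 2 ≤ m)
    (θ : ℝ) :
    piExpect q (fun x : Fin m → U => Real.exp (θ * collEst h x))
      ≤ piExpect q (fun w : Fin 2 → U =>
          Real.exp (θ / (m / 2 : ℕ) * collide h (w 0) (w 1))) ^ (m / 2) := by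
  have hσ (σ : Equiv.Perm (Fin m)) :
      piExpect q (fun x : Fin m → U =>
        Real.exp (θ / (m / 2 : ℕ) * pairCollisions h (x ∘ (pairEquiv m).trans σ ∘ Sum.inl)))
      = piExpect q (fun w : Fin 2 → U =>
          Real.exp (θ / (m / 2 : ℕ) * collide h (w 0) (w 1))) ^ (m / 2) := by
    set a := θ / (m / 2 : ℕ)
    exact (piExpect_comp_equiv ((pairEquiv m).trans σ)
      fun y => Real.exp (a * pairCollisions h (y ∘ Sum.inl))).trans <|
      (piExpect_comp_inl hq1 fun z => Real.exp (a * pairCollisions h z)).trans <|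
      piExpect_exp_pairCollisions h a
  calc piExpect q (fun x : Fin m → U => Real.exp (θ * collEst h x))
      ≤ piExpect q (fun x : Fin m → U => (m.factorial : ℝ)⁻¹ * ∑ σ : Equiv.Perm (Fin m),
          Real.exp (θ / (m / 2 : ℕ) * pairCollisions h (x ∘ (pairEquiv m).trans σ ∘ Sum.inl))) :=
        piExpect_mono hq0 fun x => exp_mul_collEst_le h hm x θ
    _ = _ := by
        rw [piExpect_const_mul, piExpect_sum, Finset.sum_congr rfl fun σ _ => hσ σ,
          Finset.sum_const, Finset.card_univ, Fintype.card_perm, Fintype.card_fin, nsmul_eq_mul,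
          inv_mul_cancel_left₀ (by positivity)]

theorem sum_sum_mul_collide {p : Fin n → ℝ}
    (hp : ∀ i, p i = ∑ u ∈ Finset.univ.filter (fun u => h u = i), q u) :
    ∑ u, ∑ v, q u * q v * collide h u v = ∑ i, p i ^ 2 := by
  have hrow (u : U) : ∑ v, q u * q v * collide h u v = q u * p (h u) := by
    simp only [collide, mul_ite, mul_one, mul_zero, hp, Finset.mul_sum, Finset.sum_filter,
      eq_comm (a := h u)]
  rw [Finset.sum_congr rfl fun u _ => hrow u, ← Finset.sum_fiberwise Finset.univ h]
  refine Finset.sum_congr rfl fun i _ => ?_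
  rw [Finset.sum_congr rfl fun u hu => by rw [(Finset.mem_filter.mp hu).2], ← Finset.sum_mul,
    ← hp, sq]

theorem piExpect_exp_collide (hq1 : ∑ u, q u = 1) {p : Fin n → ℝ}
    (hp : ∀ i, p i = ∑ u ∈ Finset.univ.filter (fun u => h u = i), q u) (a : ℝ) :
    piExpect q (fun w : Fin 2 → U => Real.exp (a * collide h (w 0) (w 1)))
      = 1 + (∑ i, p i ^ 2) * (Real.exp a - 1) := by
  have hpt (u v : U) : Real.exp (a * collide h u v) = 1 + collide h u v * (Real.exp a - 1) := by
    unfold collide; split_ifs <;> simp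
  simp only [piExpect_fin_two, Matrix.cons_val_zero, Matrix.cons_val_one, hpt, mul_add,
    mul_one, Finset.sum_add_distrib, ← mul_assoc, ← Finset.sum_mul, sum_sum_mul_collide h hp,
    ← Finset.mul_sum, hq1, ← Finset.sum_mul]

end MomentGenerating

section Tails

variable {n m : ℕ} {q : U → ℝ}

theorem Pr_mono (hq0 : ∀ u, 0 ≤ q u) {S T : Set (Fin m → U)} (hST : S ⊆ T) :
    Pr q S ≤ Pr q T := by
  simp only [Pr_eq_piExpect_indicator]
  exact piExpect_mono hq0 (Set.indicator_le_indicator_of_subset hST fun _ => zero_le_one)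

theorem one_sub_Pr_sub_Pr_le_Pr (hq0 : ∀ u, 0 ≤ q u) (hq1 : ∑ u, q u = 1)
    {S A B : Set (Fin m → U)} (hcover : Sᶜ ⊆ A ∪ B) : 1 - Pr q A - Pr q B ≤ Pr q S := by
  suffices 1 ≤ Pr q S + Pr q A + Pr q B by linarith
  simp only [Pr_eq_piExpect_indicator, ← piExpect_add]
  rw [← piExpect_const (ι := Fin m) hq1 1]
  refine piExpect_mono hq0 fun x => ?_
  have h0 (T : Set (Fin m → U)) : 0 ≤ T.indicator (1 : (Fin m → U) → ℝ) x :=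
    Set.indicator_nonneg (fun _ _ => zero_le_one) x
  have h1 {T : Set (Fin m → U)} (hx : x ∈ T) : T.indicator (1 : (Fin m → U) → ℝ) x = 1 :=
    Set.indicator_of_mem hx 1
  simp only [Pi.add_apply]
  by_cases hS : x ∈ S
  · linarith [h1 hS, h0 A, h0 B]
  · rcases hcover hS with hA | hB
    · linarith [h0 S, h1 hA, h0 B]
    · linarith [h0 S, h0 A, h1 hB]

theorem Pr_le_exp_mul_piExpect_exp (hq0 : ∀ u, 0 ≤ q u) (f : (Fin m → U) → ℝ) (θ y : ℝ) :
    Pr q {x | θ * y ≤ θ * f x}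
      ≤ Real.exp (-(θ * y)) * piExpect q (fun x => Real.exp (θ * f x)) := by
  rw [Pr_eq_piExpect_indicator, ← piExpect_const_mul]
  refine piExpect_mono hq0 fun x => ?_
  rw [← Real.exp_add]
  by_cases hx : θ * y ≤ θ * f x
  · rw [Set.indicator_of_mem (show x ∈ {x | θ * y ≤ θ * f x} from hx), Pi.one_apply]
    exact Real.one_le_exp (by linarith)
  · simp [Set.indicator_of_notMem (show x ∉ {x | θ * y ≤ θ * f x} from hx), Real.exp_nonneg]

theorem Pr_collEst_tail_le (hq0 : ∀ u, 0 ≤ q u) (hq1 : ∑ u, q u = 1) (h : U → Fin n)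
    {p : Fin n → ℝ} (hp : ∀ i, p i = ∑ u ∈ Finset.univ.filter (fun u => h u = i), q u)
    (hm : 2 ≤ m) (θ y : ℝ) :
    Pr q {x : Fin m → U | θ * y ≤ θ * collEst h x}
      ≤ Real.exp ((m / 2 : ℕ) * (∑ i, p i ^ 2) * (Real.exp (θ / (m / 2 : ℕ)) - 1) - θ * y) := by
  set N := m / 2
  set t := (∑ i, p i ^ 2) * (Real.exp (θ / N) - 1)
  have hbase : 0 ≤ 1 + t := by
    rw [← piExpect_exp_collide h hq1 hp, ← piExpect_const (ι := Fin 2) hq1 0]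
    exact piExpect_mono hq0 fun _ => (Real.exp_pos _).le
  have hmgf : piExpect q (fun x : Fin m → U => Real.exp (θ * collEst h x)) ≤ Real.exp (N * t) :=
    calc _ ≤ (1 + t) ^ N := by
          simpa only [piExpect_exp_collide h hq1 hp] using piExpect_exp_collEst_le h hq0 hq1 hm θ
      _ ≤ Real.exp t ^ N := pow_le_pow_left₀ hbase (by linarith [Real.add_one_le_exp t]) N
      _ = Real.exp (N * t) := (Real.exp_nat_mul t N).symm
  calc _ ≤ Real.exp (-(θ * y)) * Real.exp (N * t) :=
        (Pr_le_exp_mul_piExpect_exp hq0 _ θ y).trans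
          (mul_le_mul_of_nonneg_left hmgf (Real.exp_pos _).le)
    _ = _ := by rw [← Real.exp_add]; congr 1; ring

end Tails

section Exponents

theorem exp_le_five_ninths_mul_exp {x y : ℝ} (hxy : x ≤ y - 1) :
    Real.exp x ≤ 5 / 9 * Real.exp y := by
  calc Real.exp x ≤ Real.exp (-1) * Real.exp y := by
        rw [← Real.exp_add]; exact Real.exp_le_exp.mpr (by linarith)
    _ ≤ 5 / 9 * Real.exp y := by
        refine mul_le_mul_of_nonneg_right ?_ (Real.exp_pos _).le
        rw [Real.exp_neg, inv_le_comm₀ (Real.exp_pos 1) (by norm_num)]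
        linarith [Real.add_one_le_exp 1]

theorem exp_le_one_add_add_sq {t : ℝ} (ht : |t| ≤ 1) : Real.exp t ≤ 1 + t + 3 / 4 * t ^ 2 := by
  have hb := Real.exp_bound ht (n := 2) (by norm_num)
  norm_num [Finset.sum_range_succ, Nat.factorial] at hb
  nlinarith [abs_le.mp hb, sq_abs t]

theorem four_add_sq_le_mul_sq {K g s η : ℝ} (hg : 0 ≤ g) (hs : 0 ≤ s)
    (hK : 225 / 452 ≤ K * g ^ 2) (hη : 3 * g + 6 * s * g + 5 * s ^ 2 * g ^ 2 ≤ η) :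
    4 + s ^ 2 ≤ K * η ^ 2 := by
  have hK0 : 0 < K := pos_of_mul_pos_left (by linarith) (sq_nonneg g)
  have hη' : g * (3 + 6 * s) ≤ η := by nlinarith
  have : K * (g * (3 + 6 * s)) ^ 2 ≤ K * η ^ 2 :=
    mul_le_mul_of_nonneg_left (pow_le_pow_left₀ (by positivity) hη' 2) hK0.le
  nlinarith

theorem exists_upper_exponent_le {K g s η : ℝ} (hg0 : 0 < g) (hg : g ≤ 1 / 3) (hs : 0 ≤ s)
    (hK : 225 / 452 ≤ K * g ^ 2) (hη : 3 * g + 6 * s * g + 5 * s ^ 2 * g ^ 2 ≤ η) :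
    ∃ t, 0 ≤ t ∧ K * (Real.exp t - 1) - K * t * (1 + η) ≤ -1 - s ^ 2 / 4 := by
  have hK0 : 0 < K := pos_of_mul_pos_left (by linarith) (sq_nonneg g)
  have hη0 : 0 < η := by nlinarith
  rcases le_or_gt η (3 / 2) with hη1 | hη1
  · refine ⟨2 / 3 * η, by positivity, ?_⟩
    have hexp := exp_le_one_add_add_sq (t := 2 / 3 * η)
      (by rw [abs_of_nonneg (by positivity)]; linarith)
    have := four_add_sq_le_mul_sq hg0.le hs hK hη
    nlinarith [mul_le_mul_of_nonneg_left hexp hK0.le]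
  · refine ⟨1, zero_le_one, ?_⟩
    have he : Real.exp 1 ≤ 2.7182818286 := Real.exp_one_lt_d9.le
    have hKg : 3 * (225 / 452) ≤ K * g := by nlinarith
    have hKη : 3 * (3 * (225 / 452)) + 5 * (225 / 452) * s ^ 2 ≤ K * η := by
      nlinarith [mul_le_mul_of_nonneg_left hη hK0.le]
    nlinarith

theorem lower_exponent_le {K g s η : ℝ} (hg0 : 0 < g) (hs : 0 ≤ s)
    (hK : 225 / 452 ≤ K * g ^ 2) (hη : 3 * g + 6 * s * g + 5 * s ^ 2 * g ^ 2 ≤ η)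
    (hη1 : η ≤ 1) : K * (Real.exp (-η) - 1) + K * η * (1 - η) ≤ -1 - s ^ 2 / 4 := by
  have hK0 : 0 < K := pos_of_mul_pos_left (by linarith) (sq_nonneg g)
  have hη0 : 0 < η := by nlinarith
  have hexp := exp_le_one_add_add_sq (t := -η) (by rw [abs_neg, abs_of_pos hη0]; exact hη1)
  have := four_add_sq_le_mul_sq hg0.le hs hK hη
  nlinarith [mul_le_mul_of_nonneg_left hexp hK0.le]

end Exponents

section Concentration

variable {n m : ℕ} {q : U → ℝ} {p : Fin n → ℝ} {g s η : ℝ}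

theorem Pr_lt_collEst_le (hq0 : ∀ u, 0 ≤ q u) (hq1 : ∑ u, q u = 1) (h : U → Fin n)
    (hp : ∀ i, p i = ∑ u ∈ Finset.univ.filter (fun u => h u = i), q u) (hm : 2 ≤ m)
    (hg0 : 0 < g) (hg : g ≤ 1 / 3) (hs : 0 ≤ s)
    (hK : 225 / 452 ≤ (m / 2 : ℕ) * (∑ i, p i ^ 2) * g ^ 2)
    (hη : 3 * g + 6 * s * g + 5 * s ^ 2 * g ^ 2 ≤ η) :
    Pr q {x : Fin m → U | (∑ i, p i ^ 2) * (1 + η) < collEst h x}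
      ≤ 5 / 9 * Real.exp (-s ^ 2 / 4) := by
  set N := m / 2
  set C := ∑ i, p i ^ 2
  have hN : (0 : ℝ) < N := Nat.cast_pos.mpr (by omega)
  obtain ⟨t, ht, hexp⟩ := exists_upper_exponent_le hg0 hg hs hK hη
  calc _ ≤ Pr q {x : Fin m → U | N * t * (C * (1 + η)) ≤ N * t * collEst h x} := by
        refine Pr_mono hq0 fun x hx => ?_
        exact mul_le_mul_of_nonneg_left (le_of_lt hx : C * (1 + η) ≤ collEst h x) (by positivity)
    _ ≤ Real.exp (N * C * (Real.exp (N * t / N) - 1) - N * t * (C * (1 + η))) :=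
        Pr_collEst_tail_le hq0 hq1 h hp hm _ _
    _ ≤ _ := by
        rw [mul_div_cancel_left₀ t hN.ne']
        exact exp_le_five_ninths_mul_exp (by linarith)

theorem Pr_collEst_lt_le (hq0 : ∀ u, 0 ≤ q u) (hq1 : ∑ u, q u = 1) (h : U → Fin n)
    (hp : ∀ i, p i = ∑ u ∈ Finset.univ.filter (fun u => h u = i), q u) (hm : 2 ≤ m)
    (hg0 : 0 < g) (hs : 0 ≤ s)
    (hK : 225 / 452 ≤ (m / 2 : ℕ) * (∑ i, p i ^ 2) * g ^ 2)
    (hη : 3 * g + 6 * s * g + 5 * s ^ 2 * g ^ 2 ≤ η) :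
    Pr q {x : Fin m → U | collEst h x < (∑ i, p i ^ 2) * (1 - η)}
      ≤ 5 / 9 * Real.exp (-s ^ 2 / 4) := by
  set N := m / 2
  set C := ∑ i, p i ^ 2
  have hN : (0 : ℝ) < N := Nat.cast_pos.mpr (by omega)
  rcases le_or_gt η 1 with hη1 | hη1
  · have hexp := lower_exponent_le hg0 hs hK hη hη1
    calc _ ≤ Pr q {x : Fin m → U | -(N * η) * (C * (1 - η)) ≤ -(N * η) * collEst h x} := by
          refine Pr_mono hq0 fun x hx => ?_
          have : 0 ≤ N * η := mul_nonneg hN.le (by nlinarith)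
          simp only [Set.mem_ofPred_eq, neg_mul, neg_le_neg_iff]
          exact mul_le_mul_of_nonneg_left (le_of_lt hx) this
      _ ≤ Real.exp (N * C * (Real.exp (-(N * η) / N) - 1) - -(N * η) * (C * (1 - η))) :=
          Pr_collEst_tail_le hq0 hq1 h hp hm _ _
      _ ≤ _ := by
          rw [neg_div, mul_div_cancel_left₀ η hN.ne']
          exact exp_le_five_ninths_mul_exp (by linarith)
  · have hempty : {x : Fin m → U | collEst h x < C * (1 - η)} = ∅ := by
      refine Set.eq_empty_of_forall_notMem fun x hx => ?_
      have hC : 0 ≤ C := Finset.sum_nonneg fun i _ => sq_nonneg (p i)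
      have : C * (1 - η) ≤ 0 := mul_nonpos_of_nonneg_of_nonpos hC (by linarith)
      exact absurd hx (not_lt.mpr (this.trans (collEst_nonneg h x)))
    rw [hempty, Pr_eq_piExpect_indicator, Set.indicator_empty]
    exact (piExpect_const hq1 0).le.trans (by positivity)

theorem one_sub_le_Pr_abs_collEst_div_sub_one_le (hq0 : ∀ u, 0 ≤ q u) (hq1 : ∑ u, q u = 1)
    (h : U → Fin n) (hp : ∀ i, p i = ∑ u ∈ Finset.univ.filter (fun u => h u = i), q u)
    (hm : 2 ≤ m) (hg0 : 0 < g) (hg : g ≤ 1 / 3) (hs : 0 ≤ s)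
    (hK : 225 / 452 ≤ (m / 2 : ℕ) * (∑ i, p i ^ 2) * g ^ 2)
    (hη : 3 * g + 6 * s * g + 5 * s ^ 2 * g ^ 2 ≤ η) :
    1 - 10 / 9 * Real.exp (-s ^ 2 / 4)
      ≤ Pr q {x : Fin m → U | |collEst h x * (1 / ∑ i, p i ^ 2) - 1| ≤ η} := by
  set C := ∑ i, p i ^ 2
  have hC : 0 < C := pos_of_mul_pos_right (pos_of_mul_pos_left (by linarith) (sq_nonneg g))
    (Nat.cast_nonneg _)
  have hcover : {x : Fin m → U | |collEst h x * (1 / C) - 1| ≤ η}ᶜ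
      ⊆ {x | C * (1 + η) < collEst h x} ∪ {x | collEst h x < C * (1 - η)} := by
    intro x hx
    simp only [Set.mem_compl_iff, Set.mem_ofPred_eq, not_le, lt_abs, ← div_eq_mul_one_div] at hx
    rcases hx with hx | hx
    · left
      have := (lt_div_iff₀ hC).mp (show 1 + η < collEst h x / C by linarith)
      exact (show C * (1 + η) < collEst h x by linarith)
    · right
      have := (div_lt_iff₀ hC).mp (show collEst h x / C < 1 - η by linarith)
      exact (show collEst h x < C * (1 - η) by linarith)
  have := one_sub_Pr_sub_Pr_le_Pr hq0 hq1 hcover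
  linarith [Pr_lt_collEst_le hq0 hq1 h hp hm hg0 hg hs hK hη,
    Pr_collEst_lt_le hq0 hq1 h hp hm hg0 hs hK hη]

end Concentration

section Parameters

theorem sum_eq_one_of_fiber_sums {n : ℕ} {q : U → ℝ} (hq1 : ∑ u, q u = 1) (h : U → Fin n)
    {p : Fin n → ℝ} (hp : ∀ i, p i = ∑ u ∈ Finset.univ.filter (fun u => h u = i), q u) :
    ∑ i, p i = 1 := by
  simp only [hp, Finset.sum_fiberwise, hq1]

theorem one_le_mul_sum_sq {n : ℕ} {p : Fin n → ℝ} (hp1 : ∑ i, p i = 1) :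
    1 ≤ n * ∑ i, p i ^ 2 := by
  simpa [hp1] using sq_sum_le_card_mul_sum_sq (s := Finset.univ) (f := p)

theorem lt_of_mul_sq_eq_mul_sq {n m : ℕ} {ε ν : ℝ} (hn : 24 < n) (hε0 : 0 < ε) (hε : ε < 1 / 3)
    (hν : 1 ≤ ν) (hmε : m * ε ^ 2 = n * ν ^ 2) : 225 < m := by
  have hn' : (25 : ℝ) ≤ n := by exact_mod_cast hn
  have : (225 : ℝ) < m := by nlinarith [one_le_pow₀ (n := 2) hν]
  exact_mod_cast this

theorem mul_le_natCast_div_two {m : ℕ} (hm : 226 ≤ m) : 225 / 452 * (m : ℝ) ≤ (m / 2 : ℕ) := by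
  have : 225 * m ≤ 452 * (m / 2) := by omega
  have : ((225 * m : ℕ) : ℝ) ≤ ((452 * (m / 2) : ℕ) : ℝ) := by exact_mod_cast this
  push_cast at this
  linarith

theorem le_natCast_div_two_mul_mul_sq {n m : ℕ} {C ε ν : ℝ} (hn : 24 < n) (hε0 : 0 < ε)
    (hε : ε < 1 / 3) (hν : 1 ≤ ν) (hC : 1 ≤ n * C) (hmε : m * ε ^ 2 = n * ν ^ 2) :
    225 / 452 ≤ (m / 2 : ℕ) * C * (ε / ν) ^ 2 := by
  have hm := mul_le_natCast_div_two (lt_of_mul_sq_eq_mul_sq hn hε0 hε hν hmε)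
  have hν0 : 0 < ν := by linarith
  have hC0 : 0 < C := pos_of_mul_pos_right (by linarith) (Nat.cast_nonneg n)
  have hnC : (m : ℝ) * (ε ^ 2 * C / ν ^ 2) = n * C := by
    rw [mul_div_assoc', ← mul_assoc, hmε]; field_simp
  calc (225 / 452 : ℝ) ≤ 225 / 452 * m * (ε ^ 2 * C / ν ^ 2) := by
        rw [mul_assoc, hnC]; linarith
    _ ≤ (m / 2 : ℕ) * (ε ^ 2 * C / ν ^ 2) := mul_le_mul_of_nonneg_right hm (by positivity)
    _ = _ := by ring

end Parameters

end CollisionEstimator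

theorem collision_estimator_gaussian_tail_general
    {U : Type*} [Fintype U]
    (n : ℕ) (hn : 24 < n)
    (q : U → ℝ) (hq0 : ∀ u, 0 ≤ q u) (hq1 : ∑ u, q u = 1)
    (h : U → Fin n)
    (p : Fin n → ℝ)
    (hp : ∀ i, p i = ∑ u ∈ Finset.univ.filter (fun u => h u = i), q u)
    (m : ℕ)
    (ε δ s : ℝ) (hε0 : 0 < ε) (hε : ε < 1 / 3) (hδ : 0 < δ) (hs : 0 < s)
    (hmn : (m : ℝ) = ε ^ (-2 : ℝ) * (n : ℝ) ^ (1 + δ)) :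
    1 - (10 / 9) * Real.exp (-s ^ 2 / 4)
      ≤ Pr q {x : Fin m → U |
          |collEst h x * (1 / ∑ i : Fin n, p i ^ 2) - 1|
            ≤ ε * (3 + 6 * s / (n : ℝ) ^ (δ / 2) + 5 * s ^ 2 * ε / (n : ℝ) ^ δ)} := by
  open CollisionEstimator in
  set ν := (n : ℝ) ^ (δ / 2)
  have hn0 : (0 : ℝ) < n := by exact_mod_cast (show 0 < n by omega)
  have hν : 1 ≤ ν := Real.one_le_rpow (by exact_mod_cast (show 1 ≤ n by omega)) (by positivity)
  have hν2 : (n : ℝ) ^ δ = ν ^ 2 := by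
    rw [← Real.rpow_natCast, ← Real.rpow_mul hn0.le]; norm_num
  have hmε : (m : ℝ) * ε ^ 2 = n * ν ^ 2 := by
    rw [hmn, ← hν2, Real.rpow_neg hε0.le, Real.rpow_two, Real.rpow_add hn0, Real.rpow_one]
    field_simp
  have hg : ε / ν ≤ ε := div_le_self hε0.le hν
  refine one_sub_le_Pr_abs_collEst_div_sub_one_le hq0 hq1 h hp
    (by have := lt_of_mul_sq_eq_mul_sq hn hε0 hε hν hmε; omega) (g := ε / ν) (by positivity)
    (by linarith) hs.le
    (le_natCast_div_two_mul_mul_sq hn hε0 hε hν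
      (one_le_mul_sum_sq (sum_eq_one_of_fiber_sums hq1 h hp)) hmε) ?_
  have hν0 : ν ≠ 0 := by positivity
  rw [hν2, show ε * (3 + 6 * s / ν + 5 * s ^ 2 * ε / ν ^ 2)
    = 3 * ε + 6 * s * (ε / ν) + 5 * s ^ 2 * (ε / ν) ^ 2 by field_simp]
  linarith

/-- Theorem 4 of the paper: For all `n > 24`, `0 < ε < 1/3`, `δ > 0`,
`s > 0`, if `m = ε⁻² n^(1+δ)`, then with probability at least `1 − (10/9) e^(−s²/4)`
the empirical collision probability estimates `‖p‖² = ∑ i, p i ^ 2` within relative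
error `ε (3 + 6s/n^(δ/2) + 5s²ε/n^δ)`. -/
theorem collision_estimator_gaussian_tail
    {U : Type*} [Fintype U] [Nonempty U]
    (n : ℕ) (hn : 24 < n)
    (q : U → ℝ) (hq0 : ∀ u, 0 ≤ q u) (hq1 : ∑ u, q u = 1)
    (h : U → Fin n)
    (p : Fin n → ℝ)
    (hp : ∀ i, p i = ∑ u ∈ Finset.univ.filter (fun u => h u = i), q u)
    (m : ℕ) (hm : 2 ≤ m)
    (ε δ s : ℝ) (hε0 : 0 < ε) (hε : ε < 1 / 3) (hδ : 0 < δ) (hs : 0 < s)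
    (hmn : (m : ℝ) = ε ^ (-2 : ℝ) * (n : ℝ) ^ (1 + δ)) :
    1 - (10 / 9) * Real.exp (-s ^ 2 / 4)
      ≤ Pr q {x : Fin m → U |
          |collEst h x * (1 / ∑ i : Fin n, p i ^ 2) - 1|
            ≤ ε * (3 + 6 * s / (n : ℝ) ^ (δ / 2) + 5 * s ^ 2 * ε / (n : ℝ) ^ δ)} :=
  collision_estimator_gaussian_tail_general n hn q hq0 hq1 h p hp m ε δ s hε0 hε hδ hs hmn
end

section
/- For all n > 24, 0 < ε < 1/3, and all m such that the load factor L = m/n satisfies L > ε^{-2} (so in particular L > 9), one has P{ |∑_{i=1}^n k_i(x)(k_i(x)−1)/(m(m−1)) · 1/‖p‖² − 1| ≤ 22 ε } ≥ 1 − (10/9) e^{−L ε²}, where x ∈ U^m is drawn from the product measure. -/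
/-!
Hoeffding's decoupling: averaging over all permutations of the `m` positions writes the
collision estimator as the mean of `(1/k) · #(colliding pairs among k = ⌊m/2⌋ disjoint pairs)`.
By Jensen its moment generating function is therefore dominated by that of `Bin(k, ‖p‖²)/k`,
namely `(1 + ‖p‖² (eᵗ - 1))ᵏ`. The Chernoff bound at `t = ±kε` bounds each tail by
`exp (-21 k ‖p‖² ε²)`, and `k ‖p‖² ≥ L / 4` since `‖p‖² ≥ 1 / n` by Cauchy–Schwarz.
-/

open Finset
open scoped BigOperators

theorem Real.exp_expect_le_expect_exp {ι : Type*} {s : Finset ι} (hs : s.Nonempty)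
    (f : ι → ℝ) :
    Real.exp (𝔼 i ∈ s, f i) ≤ 𝔼 i ∈ s, Real.exp (f i) := by
  have hcard : (0 : ℝ) < #s := by exact_mod_cast hs.card_pos
  have := convexOn_exp.map_sum_le (t := s) (w := fun _ => 1 / (#s : ℝ)) (p := f)
    (fun _ _ => by positivity) (by simp [hcard.ne']) (fun _ _ => Set.mem_univ _)
  simpa only [expect_eq_sum_div_card, smul_eq_mul, one_div_mul_eq_div, sum_div] using this

theorem exists_perm_apply_eq_and_apply_eq {α : Type*} [DecidableEq α] {a b a' b' : α}
    (hab : a ≠ b) (hab' : a' ≠ b') : ∃ τ : Equiv.Perm α, τ a = a' ∧ τ b = b' := by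
  refine ⟨(Equiv.swap a a').trans (Equiv.swap ((Equiv.swap a a') b) b'), ?_, ?_⟩
  · have hb : Equiv.swap a a' b ≠ a' := fun hc =>
      hab ((Equiv.swap a a').injective (by rw [Equiv.swap_apply_left, hc]))
    simp only [Equiv.trans_apply, Equiv.swap_apply_left]
    exact Equiv.swap_apply_of_ne_of_ne hb.symm hab'
  · simp only [Equiv.trans_apply, Equiv.swap_apply_left]

theorem expect_perm_apply_apply {α : Type*} [Fintype α] [DecidableEq α] (f : α → α → ℝ)
    {a b : α} (hab : a ≠ b) :
    𝔼 σ : Equiv.Perm α, f (σ a) (σ b)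
      = 𝔼 p ∈ (univ : Finset α).offDiag, f p.1 p.2 := by
  have hoff : (univ : Finset α).offDiag.Nonempty := ⟨(a, b), by simp [hab]⟩
  have htransitive : ∀ p ∈ (univ : Finset α).offDiag,
      𝔼 σ : Equiv.Perm α, f (σ p.1) (σ p.2) = 𝔼 σ : Equiv.Perm α, f (σ a) (σ b) := by
    rintro ⟨a', b'⟩ hp
    obtain ⟨τ, rfl, rfl⟩ := exists_perm_apply_eq_and_apply_eq hab (mem_offDiag.1 hp).2.2
    exact Fintype.expect_equiv (Equiv.mulRight τ) _ _ fun σ => rfl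
  calc 𝔼 σ : Equiv.Perm α, f (σ a) (σ b)
      = 𝔼 p ∈ (univ : Finset α).offDiag, 𝔼 σ : Equiv.Perm α, f (σ p.1) (σ p.2) := by
        rw [expect_congr rfl htransitive, expect_const hoff]
    _ = 𝔼 σ : Equiv.Perm α, 𝔼 p ∈ (univ : Finset α).offDiag, f (σ p.1) (σ p.2) :=
        expect_comm ..
    _ = 𝔼 p ∈ (univ : Finset α).offDiag, f p.1 p.2 := by
        refine (expect_congr rfl fun σ _ => ?_).trans (expect_const univ_nonempty _)
        exact expect_equiv (Equiv.prodCongr σ σ) (by simp [σ.injective.ne_iff]) (fun _ _ => rfl)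

noncomputable def prodExpect {U ι : Type*} [Fintype U] [Fintype ι] [DecidableEq ι]
    (q : U → ℝ) (f : (ι → U) → ℝ) : ℝ :=
  ∑ x : ι → U, (∏ j, q (x j)) * f x

section ProductMeasure

variable {U ι κ : Type*} [Fintype U] [Fintype ι] [DecidableEq ι] [Fintype κ] [DecidableEq κ]
  {q : U → ℝ}

theorem sum_prod_eq_one (hq1 : ∑ u, q u = 1) : ∑ x : ι → U, ∏ j, q (x j) = 1 := by
  rw [← Fintype.prod_sum]
  simp [hq1]

theorem prodExpect_comp_equiv (e : κ ≃ ι) (f : (κ → U) → ℝ) :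
    prodExpect q (fun x : ι → U => f (x ∘ e)) = prodExpect q f := by
  unfold prodExpect
  rw [← (Equiv.arrowCongr e (Equiv.refl U)).sum_comp]
  refine Fintype.sum_congr _ _ fun y => ?_
  simp [Function.comp_def, ← e.symm.prod_comp (fun j => q (y j))]

theorem prodExpect_comp_inl (hq1 : ∑ u, q u = 1) (f : (κ → U) → ℝ) :
    prodExpect q (fun x : κ ⊕ ι → U => f (x ∘ Sum.inl)) = prodExpect q f := by
  unfold prodExpect
  rw [← (Equiv.sumArrowEquivProdArrow κ ι U).symm.sum_comp, Fintype.sum_prod_type]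
  refine Fintype.sum_congr _ _ fun y => ?_
  simp only [Fintype.prod_sum_type, Equiv.sumArrowEquivProdArrow_symm_apply_inl,
    Equiv.sumArrowEquivProdArrow_symm_apply_inr]
  have hinl (z : ι → U) :
      (Equiv.sumArrowEquivProdArrow κ ι U).symm (y, z) ∘ Sum.inl = y := rfl
  simp only [hinl, mul_right_comm _ (∏ j, q _), ← Finset.mul_sum,
    sum_prod_eq_one hq1, mul_one]

theorem prodExpect_comp_of_injective (hq1 : ∑ u, q u = 1) {e : κ → ι}
    (he : Function.Injective e) (f : (κ → U) → ℝ) :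
    prodExpect q (fun x : ι → U => f (x ∘ e)) = prodExpect q f := by
  classical
  let E : κ ⊕ {j // j ∉ Set.range e} ≃ ι :=
    (Equiv.sumCongr (Equiv.ofInjective e he) (Equiv.refl _)).trans (Equiv.sumCompl _)
  calc prodExpect q (fun x : ι → U => f (x ∘ e))
      = prodExpect q (fun x : ι → U => f ((x ∘ E) ∘ Sum.inl)) := rfl
    _ = prodExpect q (fun y => f (y ∘ Sum.inl)) :=
        prodExpect_comp_equiv (q := q) E (fun y => f (y ∘ Sum.inl))
    _ = prodExpect q f := prodExpect_comp_inl hq1 f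

theorem prodExpect_prod_pairs (G : U → U → ℝ) :
    prodExpect q (fun y : ι × Fin 2 → U => ∏ i, G (y (i, 0)) (y (i, 1)))
      = (∑ u, ∑ v, q u * q v * G u v) ^ Fintype.card ι := by
  unfold prodExpect
  rw [← (Equiv.curry ι (Fin 2) U).symm.sum_comp]
  simp only [Equiv.curry_symm_apply, Fintype.prod_prod_type, Function.uncurry_apply_pair,
    Fin.prod_univ_two, ← Finset.prod_mul_distrib]
  rw [← Fintype.prod_sum (fun _ (z : Fin 2 → U) => q (z 0) * q (z 1) * G (z 0) (z 1)),
    Finset.prod_const, Finset.card_univ, ← (finTwoArrowEquiv U).symm.sum_comp,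
    Fintype.sum_prod_type]
  simp

theorem prodExpect_mono (hq0 : ∀ u, 0 ≤ q u) {f g : (ι → U) → ℝ}
    (hfg : ∀ x, f x ≤ g x) :
    prodExpect q f ≤ prodExpect q g :=
  sum_le_sum fun x _ => mul_le_mul_of_nonneg_left (hfg x) (prod_nonneg fun _ _ => hq0 _)

theorem prodExpect_expect {α : Type*} (s : Finset α) (F : α → (ι → U) → ℝ) :
    prodExpect q (fun x => 𝔼 σ ∈ s, F σ x) = 𝔼 σ ∈ s, prodExpect q (F σ) := by
  simp only [prodExpect, mul_expect, expect_sum_comm]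

end ProductMeasure

section Probability

variable {U : Type*} [Fintype U] {m : ℕ} {q : U → ℝ}

theorem Pr_mono (hq0 : ∀ u, 0 ≤ q u) {S T : Set (Fin m → U)} (hST : S ⊆ T) :
    Pr q S ≤ Pr q T :=
  sum_le_sum fun x _ =>
    Set.indicator_le_indicator_of_subset hST (fun _ => prod_nonneg fun _ _ => hq0 _) x

theorem Pr_union_le (hq0 : ∀ u, 0 ≤ q u) (S T : Set (Fin m → U)) :
    Pr q (S ∪ T) ≤ Pr q S + Pr q T := by
  unfold Pr
  rw [← sum_add_distrib]
  refine sum_le_sum fun x _ => ?_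
  have hinter : 0 ≤ (S ∩ T).indicator (fun y => ∏ j, q (y j)) x :=
    Set.indicator_nonneg (fun _ _ => prod_nonneg fun _ _ => hq0 _) x
  have := congrFun (Set.indicator_union_add_inter (fun y => ∏ j, q (y j)) S T) x
  simp only [Pi.add_apply] at this
  linarith

theorem Pr_compl (hq1 : ∑ u, q u = 1) (S : Set (Fin m → U)) : Pr q Sᶜ = 1 - Pr q S := by
  rw [eq_sub_iff_add_eq', Pr, Pr, ← sum_add_distrib, ← sum_prod_eq_one (ι := Fin m) hq1]
  exact sum_congr rfl fun x _ =>
    congrFun (Set.indicator_self_add_compl S (fun y => ∏ j, q (y j))) x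

theorem Pr_le_exp_neg_mul_prodExpect_exp (hq0 : ∀ u, 0 ≤ q u) (f : (Fin m → U) → ℝ)
    (c : ℝ) :
    Pr q {x | c ≤ f x} ≤ Real.exp (-c) * prodExpect q (fun x => Real.exp (f x)) := by
  rw [prodExpect, mul_sum]
  refine sum_le_sum fun x _ => ?_
  have hw : 0 ≤ ∏ j, q (x j) := prod_nonneg fun j _ => hq0 _
  rw [Set.indicator_apply]
  split_ifs with hx
  · have : 1 ≤ Real.exp (-c) * Real.exp (f x) := by
      rw [← Real.exp_add, Real.one_le_exp_iff]
      linarith [show c ≤ f x from hx]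
    nlinarith
  · positivity

end Probability

section Collisions

variable {U : Type*} [Fintype U] {n m : ℕ}

def hashLaw (q : U → ℝ) (h : U → Fin n) (i : Fin n) : ℝ :=
  ∑ u ∈ univ.filter (fun u => h u = i), q u

theorem sum_hashLaw (q : U → ℝ) (h : U → Fin n) : ∑ i, hashLaw q h i = ∑ u, q u :=
  sum_fiberwise _ _ _

theorem sum_hashLaw_sq (q : U → ℝ) (h : U → Fin n) :
    ∑ i, hashLaw q h i ^ 2 = ∑ u, ∑ v, if h u = h v then q u * q v else 0 := by
  calc ∑ i, hashLaw q h i ^ 2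
      = ∑ i, ∑ u ∈ univ.filter (fun u => h u = i), q u * hashLaw q h (h u) := by
        refine sum_congr rfl fun i _ => ?_
        rw [sq, hashLaw, sum_mul]
        exact sum_congr rfl fun u hu => by rw [(mem_filter.1 hu).2]; rfl
    _ = ∑ u, q u * hashLaw q h (h u) := sum_fiberwise _ _ _
    _ = ∑ u, ∑ v, if h u = h v then q u * q v else 0 := by
        refine sum_congr rfl fun u _ => ?_
        simp only [hashLaw, mul_sum, sum_filter, mul_ite, mul_zero, eq_comm]

theorem sum_hashLaw_sq_le_one {q : U → ℝ} (hq0 : ∀ u, 0 ≤ q u) (hq1 : ∑ u, q u = 1)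
    (h : U → Fin n) : ∑ i, hashLaw q h i ^ 2 ≤ 1 := by
  have := sum_sq_le_sq_sum_of_nonneg (s := univ) (f := hashLaw q h)
    fun i _ => sum_nonneg fun u _ => hq0 u
  rwa [sum_hashLaw, hq1, one_pow] at this

theorem one_le_card_mul_sum_hashLaw_sq {q : U → ℝ} (hq1 : ∑ u, q u = 1) (h : U → Fin n) :
    1 ≤ n * ∑ i, hashLaw q h i ^ 2 := by
  have := sq_sum_le_card_mul_sum_sq (s := univ) (f := hashLaw q h)
  rwa [sum_hashLaw, hq1, one_pow, card_univ, Fintype.card_fin] at this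

theorem sum_kcount_mul_kcount_sub_one (h : U → Fin n) (x : Fin m → U) :
    ∑ i, (kcount h x i : ℝ) * (kcount h x i - 1)
      = #((univ : Finset (Fin m)).offDiag.filter fun p => h (x p.1) = h (x p.2)) := by
  rw [card_eq_sum_card_fiberwise (f := fun p => h (x p.1)) (t := univ) (by simp), Nat.cast_sum]
  refine sum_congr rfl fun i _ => ?_
  have hfiber : ((univ : Finset (Fin m)).offDiag.filter (fun p => h (x p.1) = h (x p.2))).filter
      (fun p => h (x p.1) = i) = (univ.filter fun j => h (x j) = i).offDiag := by
    ext ⟨a, b⟩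
    simp only [mem_filter, mem_offDiag, mem_univ, true_and]
    constructor
    · rintro ⟨⟨hab, hcoll⟩, rfl⟩
      exact ⟨rfl, hcoll.symm, hab⟩
    · rintro ⟨ha, hb, hab⟩
      exact ⟨⟨hab, ha.trans hb.symm⟩, ha⟩
  rw [hfiber, offDiag_card, Nat.cast_sub (Nat.le_mul_self _), kcount]
  push_cast
  ring

theorem collEst_eq_expect_offDiag (h : U → Fin n) (x : Fin m → U) :
    collEst h x = 𝔼 p ∈ (univ : Finset (Fin m)).offDiag,
      if h (x p.1) = h (x p.2) then (1 : ℝ) else 0 := by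
  rw [collEst, ← sum_div, sum_kcount_mul_kcount_sub_one, expect_eq_sum_div_card, sum_boole,
    offDiag_card, Nat.cast_sub (Nat.le_mul_self _), card_univ, Fintype.card_fin]
  push_cast
  ring

end Collisions

section PairCollisions

variable {U ι : Type*} [Fintype U] [Fintype ι] {n m : ℕ}

def pairCollisions (h : U → Fin n) (y : ι × Fin 2 → U) : ℝ :=
  ∑ i, if h (y (i, 0)) = h (y (i, 1)) then 1 else 0

theorem card_mul_collEst_eq_expect_pairCollisions (h : U → Fin n) (e : ι × Fin 2 ↪ Fin m)
    (x : Fin m → U) :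
    Fintype.card ι * collEst h x
      = 𝔼 σ : Equiv.Perm (Fin m), pairCollisions h (x ∘ σ ∘ e) := by
  have hpair (i : ι) : e (i, 0) ≠ e (i, 1) := e.injective.ne (by simp)
  simp only [pairCollisions, expect_sum_comm, Function.comp_apply,
    expect_perm_apply_apply (fun a b => if h (x a) = h (x b) then (1 : ℝ) else 0) (hpair _),
    ← collEst_eq_expect_offDiag, sum_const, card_univ, nsmul_eq_mul]

theorem prodExpect_exp_mul_pairCollisions [DecidableEq ι] {q : U → ℝ} (hq1 : ∑ u, q u = 1)
    (h : U → Fin n) (t : ℝ) :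
    prodExpect q (fun y : ι × Fin 2 → U => Real.exp (t * pairCollisions h y))
      = (1 + (∑ i, hashLaw q h i ^ 2) * (Real.exp t - 1)) ^ Fintype.card ι := by
  have hexp (y : ι × Fin 2 → U) : Real.exp (t * pairCollisions h y)
      = ∏ i, Real.exp (t * if h (y (i, 0)) = h (y (i, 1)) then 1 else 0) := by
    rw [pairCollisions, mul_sum, Real.exp_sum]
  simp only [hexp, sum_hashLaw_sq]
  rw [prodExpect_prod_pairs (fun u v => Real.exp (t * if h u = h v then 1 else 0))]
  congr 1
  calc ∑ u, ∑ v, q u * q v * Real.exp (t * if h u = h v then 1 else 0)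
      = ∑ u, ∑ v, (q u * q v + (Real.exp t - 1) * if h u = h v then q u * q v else 0) := by
        refine sum_congr rfl fun u _ => sum_congr rfl fun v _ => ?_
        split_ifs <;> simp only [mul_one, mul_zero, Real.exp_zero] <;> ring
    _ = 1 + (∑ u, ∑ v, if h u = h v then q u * q v else 0) * (Real.exp t - 1) := by
        simp only [sum_add_distrib, ← mul_sum, hq1, mul_one]
        ring

theorem prodExpect_exp_collEst_le [DecidableEq ι] {q : U → ℝ} (hq0 : ∀ u, 0 ≤ q u)
    (hq1 : ∑ u, q u = 1) (h : U → Fin n) (e : ι × Fin 2 ↪ Fin m) (t : ℝ) :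
    prodExpect q (fun x : Fin m → U => Real.exp (Fintype.card ι * t * collEst h x))
      ≤ (1 + (∑ i, hashLaw q h i ^ 2) * (Real.exp t - 1)) ^ Fintype.card ι := by
  have hJensen (x : Fin m → U) : Real.exp (Fintype.card ι * t * collEst h x)
      ≤ 𝔼 σ : Equiv.Perm (Fin m), Real.exp (t * pairCollisions h (x ∘ (σ ∘ e))) := by
    rw [mul_comm _ t, mul_assoc, card_mul_collEst_eq_expect_pairCollisions, mul_expect]
    exact Real.exp_expect_le_expect_exp univ_nonempty _
  refine (prodExpect_mono hq0 hJensen).trans_eq ?_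
  rw [prodExpect_expect]
  refine (expect_congr rfl fun σ _ => ?_).trans (expect_const univ_nonempty _)
  rw [prodExpect_comp_of_injective hq1 (σ.injective.comp e.injective)
    (fun y => Real.exp (t * pairCollisions h y)), prodExpect_exp_mul_pairCollisions hq1]

end PairCollisions

section Concentration

variable {U : Type*} [Fintype U] {n m : ℕ} {q : U → ℝ}

theorem Pr_mul_collEst_sub_ge_le (hq0 : ∀ u, 0 ≤ q u) (hq1 : ∑ u, q u = 1) (h : U → Fin n)
    (hm : 2 ≤ m) {t : ℝ} (ht : |t| ≤ 1) (d : ℝ) :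
    Pr q {x : Fin m → U | d ≤ t * (collEst h x - ∑ i, hashLaw q h i ^ 2)}
      ≤ Real.exp (-((m / 2 : ℕ) * (d - (∑ i, hashLaw q h i ^ 2) * t ^ 2))) := by
  set r := ∑ i, hashLaw q h i ^ 2
  set k := m / 2
  have hk : (0 : ℝ) < k := by simp only [k, Nat.cast_pos]; omega
  obtain ⟨e⟩ : Nonempty (Fin k × Fin 2 ↪ Fin m) :=
    Function.Embedding.nonempty_of_card_le <| by
      simp only [Fintype.card_prod, Fintype.card_fin]; omega
  have hmgf := prodExpect_exp_collEst_le hq0 hq1 h e t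
  rw [Fintype.card_fin] at hmgf
  have hr0 : 0 ≤ r := sum_nonneg fun i _ => sq_nonneg _
  have hr1 : r ≤ 1 := sum_hashLaw_sq_le_one hq0 hq1 h
  have hbase0 : 0 ≤ 1 + r * (Real.exp t - 1) := by nlinarith [mul_nonneg hr0 (Real.exp_pos t).le]
  have hbase : 1 + r * (Real.exp t - 1) ≤ Real.exp (r * (Real.exp t - 1)) := by
    linarith [Real.add_one_le_exp (r * (Real.exp t - 1))]
  have hquad : r * (Real.exp t - 1 - t) ≤ r * t ^ 2 :=
    mul_le_mul_of_nonneg_left (le_of_abs_le (Real.abs_exp_sub_one_sub_id_le ht)) hr0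
  have hset : {x : Fin m → U | d ≤ t * (collEst h x - r)}
      = {x | k * d + k * t * r ≤ k * t * collEst h x} := by
    ext x
    simp only [Set.mem_ofPred_eq]
    constructor <;> intro hx <;> nlinarith
  calc Pr q {x : Fin m → U | d ≤ t * (collEst h x - r)}
      ≤ Real.exp (-(k * d + k * t * r))
          * prodExpect q (fun x : Fin m → U => Real.exp (k * t * collEst h x)) :=
        hset ▸ Pr_le_exp_neg_mul_prodExpect_exp hq0 _ _
    _ ≤ Real.exp (-(k * d + k * t * r)) * Real.exp (r * (Real.exp t - 1)) ^ k :=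
        mul_le_mul_of_nonneg_left (hmgf.trans (pow_le_pow_left₀ hbase0 hbase k))
          (Real.exp_pos _).le
    _ = Real.exp (k * (r * (Real.exp t - 1 - t) - d)) := by
        rw [← Real.exp_nat_mul, ← Real.exp_add]
        ring_nf
    _ ≤ Real.exp (-(k * (d - r * t ^ 2))) := Real.exp_le_exp.2 (by nlinarith)

theorem Pr_collEst_relError_gt_le (hq0 : ∀ u, 0 ≤ q u) (hq1 : ∑ u, q u = 1) (h : U → Fin n)
    (hm : 2 ≤ m) {ε : ℝ} (hε0 : 0 < ε) (hε1 : ε ≤ 1) (c : ℝ) :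
    Pr q {x : Fin m → U | c * ε < |collEst h x * (1 / ∑ i, hashLaw q h i ^ 2) - 1|}
      ≤ 2 * Real.exp (-((m / 2 : ℕ) * (∑ i, hashLaw q h i ^ 2) * ε ^ 2 * (c - 1))) := by
  set r := ∑ i, hashLaw q h i ^ 2
  have hr : 0 < r := by
    have := one_le_card_mul_sum_hashLaw_sq hq1 h
    nlinarith [sum_nonneg fun i (_ : i ∈ univ) => sq_nonneg (hashLaw q h i)]
  have hsub : {x : Fin m → U | c * ε < |collEst h x * (1 / r) - 1|}
      ⊆ {x | c * ε ^ 2 * r ≤ ε * (collEst h x - r)}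
        ∪ {x | c * ε ^ 2 * r ≤ -ε * (collEst h x - r)} := by
    intro x hx
    have hdiv : collEst h x * (1 / r) - 1 = (collEst h x - r) / r := by field_simp
    simp only [Set.mem_ofPred_eq, Set.mem_union, hdiv] at hx ⊢
    rcases lt_abs.1 hx with hx | hx
    · rw [lt_div_iff₀ hr] at hx
      left; nlinarith
    · rw [lt_neg, div_lt_iff₀ hr] at hx
      right; nlinarith
  have htail (s : ℝ) (hs : |s| = ε) :
      Pr q {x : Fin m → U | c * ε ^ 2 * r ≤ s * (collEst h x - r)}
        ≤ Real.exp (-((m / 2 : ℕ) * r * ε ^ 2 * (c - 1))) := by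
    refine (Pr_mul_collEst_sub_ge_le hq0 hq1 h hm (hs.le.trans hε1) _).trans_eq ?_
    rw [← sq_abs s, hs]
    simp only [r]
    ring_nf
  calc _ ≤ _ := Pr_mono hq0 hsub
    _ ≤ _ := Pr_union_le hq0 _ _
    _ ≤ _ := add_le_add (htail ε (abs_of_pos hε0))
        (htail (-ε) (by rw [abs_neg, abs_of_pos hε0]))
    _ = _ := (two_mul _).symm

end Concentration

theorem two_mul_exp_neg_le_of_five_mul_le {x y : ℝ} (hx : 1 ≤ x) (hxy : 5 * x ≤ y) :
    2 * Real.exp (-y) ≤ 10 / 9 * Real.exp (-x) := by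
  have h5 : 5 ≤ Real.exp (4 * x) := by linarith [Real.add_one_le_exp (4 * x)]
  have hsplit : Real.exp (-y) ≤ Real.exp (-x) * Real.exp (-(4 * x)) := by
    rw [← Real.exp_add]
    exact Real.exp_le_exp.2 (by linarith)
  have hinv : Real.exp (-(4 * x)) * Real.exp (4 * x) = 1 := by rw [← Real.exp_add]; simp
  nlinarith [Real.exp_pos (-x), Real.exp_pos (-(4 * x))]

theorem collision_estimator_cor2_general
    {U : Type*} [Fintype U]
    (n : ℕ)
    (q : U → ℝ) (hq0 : ∀ u, 0 ≤ q u) (hq1 : ∑ u, q u = 1)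
    (h : U → Fin n)
    (p : Fin n → ℝ)
    (hp : ∀ i, p i = ∑ u ∈ Finset.univ.filter (fun u => h u = i), q u)
    (m : ℕ) (hm : 2 ≤ m)
    (ε : ℝ) (hε0 : 0 < ε) (hε : ε < 1 / 3)
    (L : ℝ) (hL : L = (m : ℝ) / (n : ℝ)) (hLε : ε ^ (-2 : ℝ) < L) :
    1 - (10 / 9) * Real.exp (-(L * ε ^ 2))
      ≤ Pr q {x : Fin m → U |
          |collEst h x * (1 / ∑ i : Fin n, p i ^ 2) - 1| ≤ 22 * ε} := by
  obtain rfl : p = hashLaw q h := funext hp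
  set r := ∑ i, hashLaw q h i ^ 2
  have hnr : 1 ≤ n * r := one_le_card_mul_sum_hashLaw_sq hq1 h
  have hn : (0 : ℝ) < n := by
    exact_mod_cast Nat.pos_of_ne_zero (by rintro rfl; norm_num at hnr)
  have hLε2 : 1 ≤ L * ε ^ 2 := by
    rw [Real.rpow_neg hε0.le, Real.rpow_two, inv_lt_iff_one_lt_mul₀ (by positivity)] at hLε
    linarith
  have hLr : L ≤ 4 * (m / 2 : ℕ) * r := by
    have hmk : (m : ℝ) ≤ 4 * (m / 2 : ℕ) := by exact_mod_cast (by omega : m ≤ 4 * (m / 2))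
    rw [hL, div_le_iff₀ hn]
    nlinarith [sum_nonneg fun i (_ : i ∈ univ) => sq_nonneg (hashLaw q h i)]
  have hgood : {x : Fin m → U | |collEst h x * (1 / r) - 1| ≤ 22 * ε}
      = {x | 22 * ε < |collEst h x * (1 / r) - 1|}ᶜ := by
    ext x
    simp [not_lt]
  rw [hgood, Pr_compl hq1]
  have hbad := Pr_collEst_relError_gt_le hq0 hq1 h hm hε0 (by linarith) 22
  have := two_mul_exp_neg_le_of_five_mul_le hLε2
    (show 5 * (L * ε ^ 2) ≤ (m / 2 : ℕ) * r * ε ^ 2 * (22 - 1) by nlinarith)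
  linarith

/-- Corollary 6 of the paper: For all `n > 24`, `0 < ε < 1/3`, and all
`m` such that the load factor `L = m / n` satisfies `L > ε⁻²` (so in particular
`L > 9`), with probability at least `1 − (10/9) e^(−L ε²)` the empirical collision
probability estimates `‖p‖²` within relative error `22 ε`. -/
theorem collision_estimator_cor2
    {U : Type*} [Fintype U] [Nonempty U]
    (n : ℕ) (hn : 24 < n)
    (q : U → ℝ) (hq0 : ∀ u, 0 ≤ q u) (hq1 : ∑ u, q u = 1)
    (h : U → Fin n)
    (p : Fin n → ℝ)
    (hp : ∀ i, p i = ∑ u ∈ Finset.univ.filter (fun u => h u = i), q u)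
    (m : ℕ) (hm : 2 ≤ m)
    (ε : ℝ) (hε0 : 0 < ε) (hε : ε < 1 / 3)
    (L : ℝ) (hL : L = (m : ℝ) / (n : ℝ)) (hLε : ε ^ (-2 : ℝ) < L) :
    1 - (10 / 9) * Real.exp (-(L * ε ^ 2))
      ≤ Pr q {x : Fin m → U |
          |collEst h x * (1 / ∑ i : Fin n, p i ^ 2) - 1| ≤ 22 * ε} :=
  collision_estimator_cor2_general n q hq0 hq1 h p hp m hm ε hε0 hε L hL hLε
end

section
/- For all n > 24, ε > 0, L > 9, and m = L n, one has P{ ∑_{i=1}^n v_i·k_i(x) ≤ L n ‖v‖ ‖p‖ (1 + 8ε) + 1 } ≥ 1 − (10/9) e^{−L ε²}, where x ∈ U^m is drawn from the product measure; in particular, since the average search time AST(v,x) is at most ∑_{i=1}^n v_i·k_i(x), the same probabilistic upper bound holds for AST(v,x). -/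
open Finset

private lemma exp_le_add_exp_sq (y : ℝ) : Real.exp y ≤ y + Real.exp (y ^ 2) := by
  rcases le_or_gt 1 y with hy | hy
  · have h1 : y ≤ y ^ 2 := by nlinarith
    have h2 := Real.exp_le_exp.mpr h1
    nlinarith
  · have key : Real.exp y ≤ 1 + y + y ^ 2 := by
      rcases le_or_gt y (-1) with hy2 | hy2
      · have h1 : Real.exp y ≤ 1 := by
          rw [show (1:ℝ) = Real.exp 0 by simp]
          exact Real.exp_le_exp.mpr (by linarith)
        nlinarith
      · have hab : |y| ≤ 1 := abs_le.mpr ⟨le_of_lt hy2, le_of_lt hy⟩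
        have hb := Real.exp_bound hab (n := 2) (by norm_num)
        have hsum : ∑ i ∈ Finset.range 2, y ^ i / i.factorial = 1 + y := by
          simp [Finset.sum_range_succ]
        rw [hsum] at hb
        have h2 : Real.exp y - (1 + y) ≤ |y| ^ 2 * (3 / (2 * 2)) := by
          have := (abs_le.mp hb).2
          norm_num at this ⊢
          linarith
        have h3 : |y| ^ 2 = y ^ 2 := sq_abs y
        nlinarith
    have h2 : 1 + y ^ 2 ≤ Real.exp (y ^ 2) := by
      have := Real.add_one_le_exp (y ^ 2); linarith
    linarith

private lemma mgf_bound {U : Type*} [Fintype U] (q f : U → ℝ) (b : ℝ)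
    (hq0 : ∀ u, 0 ≤ q u) (hq1 : ∑ u, q u = 1)
    (hmean : ∑ u, q u * f u = 0) (hf : ∀ u, |f u| ≤ b) :
    ∑ u, q u * Real.exp (f u) ≤ Real.exp (b ^ 2) := by
  have step : ∀ u, q u * Real.exp (f u) ≤ q u * f u + q u * Real.exp (b ^ 2) := by
    intro u
    have h2 : f u ^ 2 ≤ b ^ 2 := by
      have := abs_le.mp (hf u); nlinarith
    have h3 : Real.exp (f u ^ 2) ≤ Real.exp (b ^ 2) := Real.exp_le_exp.mpr h2
    have h1 : Real.exp (f u) ≤ f u + Real.exp (b ^ 2) :=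
      (exp_le_add_exp_sq (f u)).trans (by linarith)
    have := mul_le_mul_of_nonneg_left h1 (hq0 u)
    nlinarith
  calc ∑ u, q u * Real.exp (f u)
      ≤ ∑ u, (q u * f u + q u * Real.exp (b ^ 2)) :=
        Finset.sum_le_sum fun u _ => step u
    _ = (∑ u, q u * f u) + (∑ u, q u) * Real.exp (b ^ 2) := by
        rw [Finset.sum_add_distrib, Finset.sum_mul]
    _ = Real.exp (b ^ 2) := by rw [hmean, hq1]; ring

set_option maxHeartbeats 1600000 in
/-- Corollary 9 of the paper: For all `n > 24`, `ε > 0`, `L > 9`, and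
`m = L n`, with probability at least `1 − (10/9) e^(−L ε²)` over the inserted key
sequence `x`, one has `∑ i, v i · k_i(x) ≤ L n ‖v‖ ‖p‖ (1 + 8ε) + 1`; in particular
the same probabilistic upper bound holds for any `AST` (average search time) function
satisfying `AST x ≤ ∑ i, v i · k_i(x)`. -/
theorem average_search_time_bound_cor
    {U : Type*} [Fintype U] [Nonempty U]
    (n : ℕ) (hn : 24 < n)
    (q : U → ℝ) (hq0 : ∀ u, 0 ≤ q u) (hq1 : ∑ u, q u = 1)
    (h : U → Fin n)
    (p : Fin n → ℝ)
    (hp : ∀ i, p i = ∑ u ∈ Finset.univ.filter (fun u => h u = i), q u)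
    (v : Fin n → ℝ) (hv0 : ∀ i, 0 ≤ v i) (hv1 : ∀ i, v i ≤ 1)
    (hvsum : ∑ i, v i = 1)
    (m : ℕ) (hm : 2 ≤ m)
    (ε L : ℝ) (hε : 0 < ε) (hL : 9 < L) (hmn : (m : ℝ) = L * n)
    (AST : (Fin m → U) → ℝ)
    (hAST : ∀ x : Fin m → U, AST x ≤ ∑ i : Fin n, v i * (kcount h x i : ℝ)) :
    (1 - (10 / 9) * Real.exp (-(L * ε ^ 2))
      ≤ Pr q {x : Fin m → U |
          ∑ i : Fin n, v i * (kcount h x i : ℝ)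
            ≤ L * n * Real.sqrt (∑ i : Fin n, v i ^ 2)
                * Real.sqrt (∑ i : Fin n, p i ^ 2) * (1 + 8 * ε) + 1})
    ∧ (1 - (10 / 9) * Real.exp (-(L * ε ^ 2))
      ≤ Pr q {x : Fin m → U |
          AST x
            ≤ L * n * Real.sqrt (∑ i : Fin n, v i ^ 2)
                * Real.sqrt (∑ i : Fin n, p i ^ 2) * (1 + 8 * ε) + 1}) := by
    classical
  set V := Real.sqrt (∑ i, v i ^ 2) with hVdef
  set P := Real.sqrt (∑ i, p i ^ 2) with hPdef
  set T : ℝ := L * n * V * P * (1 + 8 * ε) + 1 with hTdef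
  set π : (Fin m → U) → ℝ := fun y => ∏ j, q (y j) with hπdef
  -- basic facts
  have hn0 : (0:ℝ) < n := by
    have : 0 < n := by omega
    exact_mod_cast this
  have hL0 : (0:ℝ) < L := by linarith
  have hm0 : (0:ℝ) < m := by positivity
  have hp0 : ∀ i, 0 ≤ p i := fun i => (hp i) ▸ Finset.sum_nonneg (fun u _ => hq0 u)
  have hpsum : ∑ i, p i = 1 := by
    calc ∑ i, p i = ∑ i, ∑ u ∈ Finset.univ.filter (fun u => h u = i), q u := by
          exact Finset.sum_congr rfl fun i _ => hp i
      _ = ∑ u, q u := Finset.sum_fiberwise _ _ _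
      _ = 1 := hq1
  have hVsq : V ^ 2 = ∑ i, v i ^ 2 := Real.sq_sqrt (by positivity)
  have hPsq : P ^ 2 = ∑ i, p i ^ 2 := Real.sq_sqrt (by positivity)
  have hV0 : 0 ≤ V := Real.sqrt_nonneg _
  have hP0 : 0 ≤ P := Real.sqrt_nonneg _
  have hPn : 1 ≤ (n:ℝ) * P ^ 2 := by
    have hcs := sq_sum_le_card_mul_sum_sq (s := Finset.univ) (f := p)
    rw [hpsum] at hcs
    simpa [hPsq, Finset.card_univ] using hcs
  have hPpos : 0 < P := by
    rcases lt_or_eq_of_le hP0 with h' | h'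
    · exact h'
    · exfalso
      have : (n:ℝ) * P ^ 2 = 0 := by rw [← h']; ring
      linarith
  have hviV : ∀ i, v i ≤ V := by
    intro i
    have h1 : v i ^ 2 ≤ ∑ i, v i ^ 2 :=
      Finset.single_le_sum (f := fun i => v i ^ 2) (fun i _ => sq_nonneg _) (Finset.mem_univ i)
    calc v i = Real.sqrt (v i ^ 2) := (Real.sqrt_sq (hv0 i)).symm
      _ ≤ V := Real.sqrt_le_sqrt h1
  have hnV : 1 ≤ (n:ℝ) * V := by
    calc (1:ℝ) = ∑ i, v i := hvsum.symm
      _ ≤ ∑ _i : Fin n, V := Finset.sum_le_sum (fun i _ => hviV i)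
      _ = n * V := by simp [Finset.card_univ, mul_comm]
  have hVpos : 0 < V := by
    rcases lt_or_eq_of_le hV0 with h' | h'
    · exact h'
    · exfalso
      have : (n:ℝ) * V = 0 := by rw [← h']; ring
      linarith
  -- the mean
  set μ : ℝ := ∑ i, p i * v i with hμdef
  have hμ_eq : ∑ u, q u * v (h u) = μ := by
    calc ∑ u, q u * v (h u)
        = ∑ i, ∑ u ∈ Finset.univ.filter (fun u => h u = i), q u * v (h u) :=
          (Finset.sum_fiberwise _ _ _).symm
      _ = ∑ i, p i * v i := by
          refine Finset.sum_congr rfl fun i _ => ?_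
          rw [hp i, Finset.sum_mul]
          refine Finset.sum_congr rfl fun u hu => ?_
          rw [(Finset.mem_filter.mp hu).2]
      _ = μ := hμdef.symm
  have hμ0 : 0 ≤ μ := Finset.sum_nonneg fun i _ => mul_nonneg (hp0 i) (hv0 i)
  have hμVP : μ ≤ V * P := by
    have hcs := Finset.sum_mul_sq_le_sq_mul_sq Finset.univ p v
    have hcs' : μ ^ 2 ≤ (V * P) ^ 2 := by
      rw [mul_pow, hVsq, hPsq, hμdef]
      calc μ ^ 2 = (∑ i, p i * v i) ^ 2 := by rw [hμdef]
        _ ≤ (∑ i, p i ^ 2) * (∑ i, v i ^ 2) := hcs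
        _ = (∑ i, v i ^ 2) * (∑ i, p i ^ 2) := by ring
    nlinarith [hcs', hμ0, mul_nonneg hV0 hP0]
  have hμV : μ ≤ V := by
    calc μ = ∑ i, p i * v i := rfl
      _ ≤ ∑ i, p i * V := Finset.sum_le_sum fun i _ => mul_le_mul_of_nonneg_left (hviV i) (hp0 i)
      _ = V := by rw [← Finset.sum_mul, hpsum, one_mul]
  -- Z identity
  have hZ : ∀ x : Fin m → U, ∑ i, v i * (kcount h x i : ℝ) = ∑ j, v (h (x j)) := by
    intro x
    rw [← Finset.sum_fiberwise' (Finset.univ) (fun j => h (x j)) v]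
    refine Finset.sum_congr rfl fun i _ => ?_
    rw [Finset.sum_const, kcount]
    simp [mul_comm]
  -- π facts
  have hπ0 : ∀ x, 0 ≤ π x := fun x => Finset.prod_nonneg fun j _ => hq0 (x j)
  have hπ1 : ∑ x : Fin m → U, π x = 1 := by
    rw [hπdef, ← Fintype.sum_pow q m, hq1, one_pow]
  -- complement rule
  have hPrd : ∀ S : Set (Fin m → U), Pr q S = ∑ x : Fin m → U, S.indicator π x :=
    fun S => rfl
  clear_value V P T π μ
  have hcompl : ∀ S : Set (Fin m → U), Pr q S = 1 - Pr q Sᶜ := by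
    intro S
    have hadd : ∀ x, S.indicator π x + Sᶜ.indicator π x = π x := by
      intro x
      by_cases hx : x ∈ S <;> simp [Set.indicator_apply, hx]
    have : Pr q S + Pr q Sᶜ = 1 := by
      rw [hPrd, hPrd, ← Finset.sum_add_distrib]
      calc ∑ x : Fin m → U, (S.indicator π x + Sᶜ.indicator π x)
          = ∑ x : Fin m → U, π x := Finset.sum_congr rfl fun x _ => hadd x
        _ = 1 := hπ1
    linarith
  -- monotonicity
  have hmono : ∀ S S' : Set (Fin m → U), S ⊆ S' → Pr q S ≤ Pr q S' := by
    intro S S' hsub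
    rw [hPrd, hPrd]
    refine Finset.sum_le_sum fun x _ => ?_
    exact Set.indicator_le_indicator_of_subset hsub (fun y => hπ0 y) x
  -- the Chernoff parameter
  set lam : ℝ := 4 * ε * P / V with hlamdef
  clear_value lam
  have hlam0 : 0 < lam := by
    rw [hlamdef]
    exact div_pos (mul_pos (mul_pos (by norm_num) hε) hPpos) hVpos
  -- mgf bound for one step
  have hmgf : ∑ u, q u * Real.exp (lam * (v (h u) - μ)) ≤ Real.exp ((lam * V) ^ 2) := by
    apply mgf_bound q _ (lam * V) hq0 hq1
    · have : ∀ u, q u * (lam * (v (h u) - μ)) = lam * (q u * v (h u)) - lam * μ * q u := by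
        intro u; ring
      rw [Finset.sum_congr rfl fun u _ => this u, Finset.sum_sub_distrib, ← Finset.mul_sum,
        ← Finset.mul_sum, hμ_eq, hq1]
      ring
    · intro u
      rw [abs_mul, abs_of_pos hlam0]
      have h1 : |v (h u) - μ| ≤ V := by
        rw [abs_le]
        constructor
        · linarith [hv0 (h u), hμV]
        · linarith [hviV (h u), hμ0]
      exact mul_le_mul_of_nonneg_left h1 (le_of_lt hlam0)
  -- Chernoff bound for the bad set
  set Bad : Set (Fin m → U) := {x | ¬ (∑ i, v i * (kcount h x i : ℝ) ≤ T)} with hBaddef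
  clear_value Bad
  have hchernoff : Pr q Bad ≤ Real.exp (-(L * ε ^ 2)) := by
    have step1 : Pr q Bad ≤ ∑ x : Fin m → U,
        π x * Real.exp (lam * ((∑ j, v (h (x j))) - T)) := by
      rw [hPrd]
      refine Finset.sum_le_sum fun x _ => ?_
      by_cases hx : x ∈ Bad
      · rw [Set.indicator_of_mem hx]
        have hxT : T < ∑ j, v (h (x j)) := by
          have := hx
          rw [hBaddef, Set.mem_setOf_eq, not_le, hZ x] at this
          exact this
        have h1 : (1:ℝ) ≤ Real.exp (lam * ((∑ j, v (h (x j))) - T)) :=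
          Real.one_le_exp (mul_nonneg hlam0.le (by linarith))
        exact le_mul_of_one_le_right (hπ0 x) h1
      · rw [Set.indicator_of_notMem hx]
        exact mul_nonneg (hπ0 x) (Real.exp_pos _).le
    have step2 : ∀ x : Fin m → U,
        π x * Real.exp (lam * ((∑ j, v (h (x j))) - T))
          = Real.exp (lam * (m * μ - T)) * ∏ j, (q (x j) * Real.exp (lam * (v (h (x j)) - μ))) := by
      intro x
      have e1 : ∑ j, lam * (v (h (x j)) - μ) = lam * ((∑ j, v (h (x j))) - m * μ) := by
        rw [← Finset.mul_sum, Finset.sum_sub_distrib, Finset.sum_const, Finset.card_univ,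
          Fintype.card_fin, nsmul_eq_mul]
      rw [hπdef]
      calc (fun y => ∏ j, q (y j)) x * Real.exp (lam * ((∑ j, v (h (x j))) - T))
          = (∏ j, q (x j)) * Real.exp (lam * ((∑ j, v (h (x j))) - T)) := rfl
        _ = (∏ j, q (x j)) * (Real.exp (lam * (m * μ - T))
              * Real.exp (lam * ((∑ j, v (h (x j))) - m * μ))) := by
            rw [← Real.exp_add]
            congr 1
            ring
        _ = Real.exp (lam * (m * μ - T))
              * ∏ j, (q (x j) * Real.exp (lam * (v (h (x j)) - μ))) := by
            rw [Finset.prod_mul_distrib, ← Real.exp_sum, e1]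
            ring
    have step3 : ∑ x : Fin m → U,
        π x * Real.exp (lam * ((∑ j, v (h (x j))) - T))
          = Real.exp (lam * (m * μ - T)) * (∑ u, q u * Real.exp (lam * (v (h u) - μ))) ^ m := by
      rw [Finset.sum_congr rfl fun x _ => step2 x, ← Finset.mul_sum]
      congr 1
      rw [Fintype.sum_pow]
    have step4 : (∑ u, q u * Real.exp (lam * (v (h u) - μ))) ^ m
        ≤ Real.exp ((lam * V) ^ 2) ^ m := by
      apply pow_le_pow_left₀ _ hmgf
      exact Finset.sum_nonneg fun u _ => mul_nonneg (hq0 u) (Real.exp_pos _).le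
    have step5 : Real.exp (lam * (m * μ - T)) * Real.exp ((lam * V) ^ 2) ^ m
        = Real.exp (lam * (m * μ - T) + m * (lam * V) ^ 2) := by
      rw [← Real.exp_nat_mul, ← Real.exp_add]
    have hexp_le : lam * (m * μ - T) + m * (lam * V) ^ 2 ≤ -(L * ε ^ 2) := by
      have hlamV : lam * V = 4 * ε * P := by
        rw [hlamdef]; field_simp
      have hμm : (m:ℝ) * μ ≤ (m:ℝ) * (V * P) := mul_le_mul_of_nonneg_left hμVP hm0.le
      have hT8 : (m:ℝ) * μ + 8 * ε * (m:ℝ) * (V * P) ≤ T := by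
        rw [hTdef, ← hmn]
        linarith [hμm]
      have h1 : lam * ((m:ℝ) * μ - T) ≤ -(lam * (8 * ε * (m:ℝ) * (V * P))) := by
        have h1a : (m:ℝ) * μ - T ≤ -(8 * ε * (m:ℝ) * (V * P)) := by linarith
        have := mul_le_mul_of_nonneg_left h1a hlam0.le
        linarith
      have h2 : lam * (8 * ε * (m:ℝ) * (V * P)) = 32 * ε ^ 2 * (m:ℝ) * P ^ 2 := by
        rw [hlamdef]; field_simp; ring
      have h3 : (m:ℝ) * (lam * V) ^ 2 = 16 * ε ^ 2 * (m:ℝ) * P ^ 2 := by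
        rw [hlamV]; ring
      have h4 : L ≤ (m:ℝ) * P ^ 2 := by
        rw [hmn]
        calc L = L * 1 := (mul_one L).symm
          _ ≤ L * ((n:ℝ) * P ^ 2) := mul_le_mul_of_nonneg_left hPn hL0.le
          _ = L * (n:ℝ) * P ^ 2 := by ring
      have h5 : ε ^ 2 * L ≤ ε ^ 2 * ((m:ℝ) * P ^ 2) :=
        mul_le_mul_of_nonneg_left h4 (sq_nonneg ε)
      linarith [h1, h2, h3, h5, mul_nonneg hL0.le (sq_nonneg ε)]
    calc Pr q Bad ≤ ∑ x : Fin m → U, π x * Real.exp (lam * ((∑ j, v (h (x j))) - T)) := step1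
      _ = Real.exp (lam * (m * μ - T)) * (∑ u, q u * Real.exp (lam * (v (h u) - μ))) ^ m := step3
      _ ≤ Real.exp (lam * (m * μ - T)) * Real.exp ((lam * V) ^ 2) ^ m := by
          exact mul_le_mul_of_nonneg_left step4 (Real.exp_pos _).le
      _ = Real.exp (lam * (m * μ - T) + m * (lam * V) ^ 2) := step5
      _ ≤ Real.exp (-(L * ε ^ 2)) := Real.exp_le_exp.mpr hexp_le
  -- conclude
  have hfirst : 1 - (10 / 9) * Real.exp (-(L * ε ^ 2))
      ≤ Pr q {x : Fin m → U | ∑ i, v i * (kcount h x i : ℝ) ≤ T} := by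
    have := hcompl {x : Fin m → U | ∑ i, v i * (kcount h x i : ℝ) ≤ T}
    have hBc : ({x : Fin m → U | ∑ i, v i * (kcount h x i : ℝ) ≤ T})ᶜ = Bad := by
      ext x; simp [hBaddef]
    rw [hBc] at this
    have hexp0 : 0 ≤ Real.exp (-(L * ε ^ 2)) := (Real.exp_pos _).le
    linarith
  constructor
  · exact hfirst
  · refine le_trans hfirst (hmono _ _ ?_)
    intro x hx
    exact le_trans (hAST x) hx
end

section
/- For all n > 24, 0 < ε < 1/3, δ > 0, s > 0, and m = ε^{-2} n^{1+δ}: for every x ∈ C_s there exists y ∈ A such that |∑_{i=1}^n k_i(x)(k_i(x)−1)/(m(m−1)) − ∑_{i=1}^n k_i(y)(k_i(y)−1)/(m(m−1))| ≤ ε ‖p‖² ( 6s/n^{δ/2} + 5s²ε/n^{δ} ). -/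
/-- Talagrand's convex distance from a point `x ∈ Ω^m` to a set `A ⊆ Ω^m`:
`d_T(x,A) = sup { inf_{y ∈ A} ∑ j, α j · 1(x j ≠ y j) : α j ≥ 0, ∑ j, α j ² ≤ 1 }`. -/
noncomputable def convexDist {Ω : Type*} [DecidableEq Ω] {m : ℕ}
    (x : Fin m → Ω) (A : Set (Fin m → Ω)) : ℝ :=
  sSup { z : ℝ | ∃ α : Fin m → ℝ, (∀ j, 0 ≤ α j) ∧ (∑ j, α j ^ 2) ≤ 1 ∧
    z = sInf { t : ℝ | ∃ y ∈ A, t = ∑ j, if x j ≠ y j then α j else 0 } }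

open Finset

lemma kcount_eq_sum {U : Type*} [Fintype U] {n m : ℕ} (h : U → Fin n) (x : Fin m → U)
    (i : Fin n) : (kcount h x i : ℝ) = ∑ j, if h (x j) = i then (1:ℝ) else 0 := by
  rw [kcount, Finset.card_filter]
  push_cast
  rfl

lemma sum_kcount {U : Type*} [Fintype U] {n m : ℕ} (h : U → Fin n) (x : Fin m → U) :
    ∑ i : Fin n, (kcount h x i : ℝ) = m := by
  simp_rw [kcount_eq_sum]
  rw [Finset.sum_comm]
  simp

lemma sum_abs_kcount_sub_le {U : Type*} [Fintype U] [DecidableEq U] {n m : ℕ}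
    (h : U → Fin n) (x y : Fin m → U) :
    ∑ i : Fin n, |(kcount h x i : ℝ) - (kcount h y i : ℝ)|
      ≤ 2 * ((Finset.univ.filter (fun j => x j ≠ y j)).card : ℝ) := by
  calc ∑ i : Fin n, |(kcount h x i : ℝ) - (kcount h y i : ℝ)|
      ≤ ∑ i : Fin n, ∑ j, |(if h (x j) = i then (1:ℝ) else 0) - (if h (y j) = i then (1:ℝ) else 0)| := by
        refine Finset.sum_le_sum fun i _ => ?_
        rw [kcount_eq_sum, kcount_eq_sum, ← Finset.sum_sub_distrib]
        exact Finset.abs_sum_le_sum_abs _ _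
    _ = ∑ j, ∑ i : Fin n, |(if h (x j) = i then (1:ℝ) else 0) - (if h (y j) = i then (1:ℝ) else 0)| :=
        Finset.sum_comm
    _ ≤ ∑ j, (if x j ≠ y j then (2:ℝ) else 0) := by
        refine Finset.sum_le_sum fun j _ => ?_
        by_cases hxy : x j = y j
        · simp [hxy]
        · simp only [ne_eq, hxy, not_false_iff, if_true]
          calc ∑ i : Fin n, |(if h (x j) = i then (1:ℝ) else 0) - (if h (y j) = i then (1:ℝ) else 0)|
              ≤ ∑ i : Fin n, ((if h (x j) = i then (1:ℝ) else 0) + (if h (y j) = i then (1:ℝ) else 0)) := by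
                refine Finset.sum_le_sum fun i _ => ?_
                split_ifs <;> norm_num
            _ = 2 := by rw [Finset.sum_add_distrib]; simp; norm_num
    _ = 2 * ((Finset.univ.filter (fun j => x j ≠ y j)).card : ℝ) := by
        rw [Finset.card_filter]
        push_cast
        rw [Finset.mul_sum]
        refine Finset.sum_congr rfl fun j _ => ?_
        split_ifs <;> norm_num

lemma exists_close_of_convexDist_lt {Ω : Type*} [DecidableEq Ω] {m : ℕ} (hm : 0 < m)
    (x : Fin m → Ω) (A : Set (Fin m → Ω)) (hAne : A.Nonempty) {s : ℝ}
    (hx : convexDist x A < s) :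
    ∃ y ∈ A, ((Finset.univ.filter (fun j => x j ≠ y j)).card : ℝ) ≤ s * Real.sqrt m := by
  classical
  have hmR : (0:ℝ) < m := by exact_mod_cast hm
  have hsq : 0 < Real.sqrt m := Real.sqrt_pos.2 hmR
  have hsqm : Real.sqrt m * Real.sqrt m = m := Real.mul_self_sqrt hmR.le
  set c : ℝ := (Real.sqrt m)⁻¹ with hc
  have hc0 : 0 ≤ c := by positivity
  have hform : ∀ y : Fin m → Ω, (∑ j, if x j ≠ y j then c else 0)
      = c * ((Finset.univ.filter (fun j => x j ≠ y j)).card : ℝ) := by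
    intro y
    rw [Finset.card_filter]
    push_cast
    rw [Finset.mul_sum]
    refine Finset.sum_congr rfl fun j _ => ?_
    split_ifs <;> norm_num
  set T : Set ℝ := { t : ℝ | ∃ y ∈ A, t = ∑ j, if x j ≠ y j then c else 0 } with hT
  obtain ⟨y0, hy0⟩ := hAne
  have hTne : T.Nonempty := ⟨_, y0, hy0, rfl⟩
  have hTbdd : BddBelow T := by
    refine ⟨0, ?_⟩
    rintro t ⟨y, hy, rfl⟩
    refine Finset.sum_nonneg fun j _ => ?_
    split_ifs <;> simp [hc0]
  have hmem : sInf T ∈ { z : ℝ | ∃ α : Fin m → ℝ, (∀ j, 0 ≤ α j) ∧ (∑ j, α j ^ 2) ≤ 1 ∧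
      z = sInf { t : ℝ | ∃ y ∈ A, t = ∑ j, if x j ≠ y j then α j else 0 } } := by
    refine ⟨fun _ => c, fun _ => hc0, ?_, rfl⟩
    have : ∑ _j : Fin m, c ^ 2 = m * c ^ 2 := by
      rw [Finset.sum_const]
      simp [nsmul_eq_mul]
    rw [this]
    have h2 : (Real.sqrt m)^2 = (m:ℝ) := Real.sq_sqrt hmR.le
    rw [hc, inv_pow, h2, mul_inv_cancel₀ hmR.ne']
  have hbdd : BddAbove { z : ℝ | ∃ α : Fin m → ℝ, (∀ j, 0 ≤ α j) ∧ (∑ j, α j ^ 2) ≤ 1 ∧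
      z = sInf { t : ℝ | ∃ y ∈ A, t = ∑ j, if x j ≠ y j then α j else 0 } } := by
    refine ⟨Real.sqrt m, ?_⟩
    rintro z ⟨α, hα0, hα1, rfl⟩
    have hbb : BddBelow { t : ℝ | ∃ y ∈ A, t = ∑ j, if x j ≠ y j then α j else 0 } := by
      refine ⟨0, ?_⟩
      rintro t ⟨y, hy, rfl⟩
      refine Finset.sum_nonneg fun j _ => ?_
      split_ifs <;> simp [hα0 j]
    have hle : sInf { t : ℝ | ∃ y ∈ A, t = ∑ j, if x j ≠ y j then α j else 0 }
        ≤ ∑ j, if x j ≠ y0 j then α j else 0 := csInf_le hbb ⟨y0, hy0, rfl⟩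
    have h2 : (∑ j, if x j ≠ y0 j then α j else 0) ≤ ∑ j, α j := by
      refine Finset.sum_le_sum fun j _ => ?_
      split_ifs <;> simp [hα0 j]
    have h3 : (∑ j, α j) ^ 2 ≤ (m:ℝ) * ∑ j, α j ^ 2 := by
      have := sq_sum_le_card_mul_sum_sq (s := (univ : Finset (Fin m))) (f := α)
      simpa using this
    have h4 : (0:ℝ) ≤ ∑ j, α j := Finset.sum_nonneg fun j _ => hα0 j
    have h5 : (∑ j, α j) ≤ Real.sqrt m := by
      nlinarith [hsq, hsqm, hα1, h3, h4]
    linarith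
  have h1 : sInf T < s := by
    rw [convexDist] at hx
    exact lt_of_le_of_lt (le_csSup hbdd hmem) hx
  obtain ⟨t, ⟨y, hyA, rfl⟩, hts⟩ := (csInf_lt_iff hTbdd hTne).mp h1
  refine ⟨y, hyA, ?_⟩
  rw [hform y] at hts
  have hsc : Real.sqrt m * c = 1 := mul_inv_cancel₀ hsq.ne'
  have h6 := mul_lt_mul_of_pos_left hts hsq
  rw [← mul_assoc, hsc, one_mul] at h6
  have h7 : Real.sqrt m * s = s * Real.sqrt m := mul_comm _ _
  linarith


lemma numPoly1 (ε M : ℝ) (hε0 : 0 ≤ ε) (hε : ε ≤ 1/3) (hM : 225 ≤ M) :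
    16*(1+3*ε)*M*(M-1) + 16*(ε^2)*M^2 ≤ 36*(M-1)^2 := by
  nlinarith [mul_nonneg (by linarith : (0:ℝ) ≤ 1/3 - ε) (by nlinarith : (0:ℝ) ≤ M*(M-1)),
    mul_nonneg (by nlinarith : (0:ℝ) ≤ 1/9 - ε^2) (sq_nonneg M),
    mul_nonneg (by linarith : (0:ℝ) ≤ M - 225) (by linarith : (0:ℝ) ≤ M)]

lemma numPoly2 (ε M N P : ℝ) (hε0 : 0 < ε) (hε : ε ≤ 1/3) (hM : 225 ≤ M)
    (hNP : 1 ≤ N*P) (hnM : N ≤ ε^2*M) (hP : 0 < P) :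
    16*((1+3*ε)*P*(M-1)+1)*M ≤ 36*P^2*N*(M-1)^2 := by
  have c0 : 1 ≤ ε^2*M*P := by nlinarith [mul_le_mul_of_nonneg_right hnM hP.le]
  have c1 : 16*M ≤ 16*(ε^2*M*P)*M := by nlinarith [c0]
  have c2 : 36*P*(M-1)^2 ≤ 36*(P^2*N)*(M-1)^2 := by
    nlinarith [mul_nonneg (mul_nonneg (sub_nonneg.mpr hNP) hP.le) (sq_nonneg (M-1))]
  have c3 : 16*(1+3*ε)*P*M*(M-1) + 16*(ε^2*M*P)*M ≤ 36*P*(M-1)^2 := by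
    nlinarith [mul_le_mul_of_nonneg_left (numPoly1 ε M hε0.le hε hM) hP.le]
  nlinarith [c1, c2, c3]

lemma numBase (ε M N Nδ : ℝ) (hN : 25 ≤ N) (hNδ : 1 ≤ Nδ) (hεM : ε^2*M = N*Nδ)
    (hε0 : 0 < ε) (hε : ε < 1/3) :
    ε^2 ≤ 1/9 ∧ N ≤ ε^2*M ∧ 225 ≤ M ∧ N ≤ M - 1 := by
  have h9 : ε^2 ≤ 1/9 := by nlinarith
  have h1 : N ≤ ε^2*M := by nlinarith
  have h2 : 225 ≤ M := by nlinarith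
  exact ⟨h9, h1, h2, by nlinarith⟩

lemma numP (N P : ℝ) (h : 1 ≤ N*P) (hN : 0 < N) : 0 < P := by nlinarith

lemma numIII (M N P s : ℝ) (hM : 225 ≤ M) (hNP : 1 ≤ N*P) (hP : 0 < P) (hs : 0 < s) :
    4*s^2/(M-1) ≤ 5*s^2*(P*N)/M := by
  have hM1 : (0:ℝ) < M - 1 := by linarith
  rw [div_le_div_iff₀ hM1 (by linarith)]
  nlinarith [mul_nonneg (mul_nonneg (sub_nonneg.mpr hNP) (sq_nonneg s)) hM1.le, sq_nonneg s]

set_option maxHeartbeats 1000000 in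
/-- Lemma 12 of the paper: For all `n > 24`, `0 < ε < 1/3`, `δ > 0`,
`s > 0`, and `m = ε⁻² n^(1+δ)`: for every `x ∈ C_s = { x : d_T(x,A) < s }` there is
`y ∈ A` (where `A` is the — assumed nonempty — set of sequences whose empirical
collision probability estimates `‖p‖²` within relative error `3ε`) with
`|collEst x − collEst y| ≤ ε ‖p‖² (6s/n^(δ/2) + 5s²ε/n^δ)`. -/
theorem empirical_collision_close_on_Cs
    {U : Type*} [Fintype U] [Nonempty U] [DecidableEq U]
    (n : ℕ) (hn : 24 < n)
    (q : U → ℝ) (hq0 : ∀ u, 0 ≤ q u) (hq1 : ∑ u, q u = 1)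
    (h : U → Fin n)
    (p : Fin n → ℝ)
    (hp : ∀ i, p i = ∑ u ∈ Finset.univ.filter (fun u => h u = i), q u)
    (m : ℕ) (hm : 2 ≤ m)
    (ε δ s : ℝ) (hε0 : 0 < ε) (hε : ε < 1 / 3) (hδ : 0 < δ) (hs : 0 < s)
    (hmn : (m : ℝ) = ε ^ (-2 : ℝ) * (n : ℝ) ^ (1 + δ))
    (A : Set (Fin m → U))
    (hA : A = {y : Fin m → U |
        |collEst h y * (1 / ∑ i : Fin n, p i ^ 2) - 1| ≤ 3 * ε})
    (hAne : A.Nonempty)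
    (x : Fin m → U) (hx : convexDist x A < s) :
    ∃ y ∈ A,
      |collEst h x - collEst h y|
        ≤ ε * (∑ i : Fin n, p i ^ 2)
            * (6 * s / (n : ℝ) ^ (δ / 2) + 5 * s ^ 2 * ε / (n : ℝ) ^ δ) := by
  classical
  obtain ⟨y, hyA, hD⟩ := exists_close_of_convexDist_lt (by omega) x A hAne hx
  refine ⟨y, hyA, ?_⟩
  set P : ℝ := ∑ i : Fin n, p i ^ 2 with hPdef
  set M : ℝ := (m : ℝ) with hMdef
  set N : ℝ := (n : ℝ) with hNdef
  set D : ℝ := ((Finset.univ.filter (fun j => x j ≠ y j)).card : ℝ) with hDdef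
  have hD0 : 0 ≤ D := Nat.cast_nonneg _
  have hN25 : (25:ℝ) ≤ N := by rw [hNdef]; exact_mod_cast hn
  have hNpos : (0:ℝ) < N := by linarith
  have hM0 : (0:ℝ) ≤ M := Nat.cast_nonneg _
  -- rpow facts
  have hε2 : ε ^ (-2:ℝ) = (ε^2)⁻¹ := by
    rw [show (-2:ℝ) = -((2:ℕ):ℝ) by norm_num, Real.rpow_neg hε0.le, Real.rpow_natCast]
  have h1δ : N ^ (1+δ) = N * N ^ δ := by rw [Real.rpow_add hNpos, Real.rpow_one]
  have hNδ1 : (1:ℝ) ≤ N ^ δ := by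
    have := Real.rpow_le_rpow_of_exponent_le (by linarith : (1:ℝ) ≤ N) hδ.le
    simpa using this
  have hNδpos : (0:ℝ) < N ^ δ := Real.rpow_pos_of_pos hNpos δ
  have hNδ2pos : (0:ℝ) < N ^ (δ/2) := Real.rpow_pos_of_pos hNpos (δ/2)
  have hNδ2sq : (N ^ (δ/2))^2 = N ^ δ := by
    rw [← Real.rpow_natCast (N^(δ/2)) 2, ← Real.rpow_mul hNpos.le]
    norm_num
  have hεM : ε^2 * M = N * N ^ δ := by
    rw [hmn, hε2, ← h1δ]
    field_simp
  obtain ⟨hε9, hnM, hM225, hNM1⟩ := numBase ε M N (N^δ) hN25 hNδ1 hεM hε0 hε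
  have hM1 : (0:ℝ) < M - 1 := by linarith
  have hMpos : (0:ℝ) < M := by linarith
  have hratio : ε^2/N^δ = N/M := by
    rw [div_eq_div_iff hNδpos.ne' hMpos.ne']
    exact hεM
  -- sum of p equals 1, P bounds
  have hsum_p : ∑ i : Fin n, p i = 1 := by
    have hfib := Finset.sum_fiberwise_of_maps_to (s := (univ : Finset U))
      (t := (univ : Finset (Fin n))) (g := h) (f := q) (fun u _ => mem_univ _)
    calc ∑ i : Fin n, p i = ∑ i : Fin n, ∑ u ∈ Finset.univ.filter (fun u => h u = i), q u :=
          Finset.sum_congr rfl fun i _ => hp i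
      _ = ∑ u, q u := hfib
      _ = 1 := hq1
  have hNP : 1 ≤ N * P := by
    have h3 := sq_sum_le_card_mul_sum_sq (s := (univ : Finset (Fin n))) (f := p)
    rw [hsum_p] at h3
    rw [Finset.card_univ, Fintype.card_fin] at h3
    rw [one_pow] at h3
    exact h3
  have hPpos : (0:ℝ) < P := numP N P hNP hNpos
  -- collEst y bound
  have hcoll_y : collEst h y ≤ (1 + 3*ε) * P := by
    rw [hA] at hyA
    simp only [Set.mem_setOf_eq] at hyA
    have h2 := (abs_le.mp hyA).2
    have h3 : collEst h y * (1/P) ≤ 1 + 3*ε := by linarith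
    rw [mul_one_div, div_le_iff₀ hPpos] at h3
    linarith
  -- sums of kcounts
  have hsum_x : ∑ i : Fin n, (kcount h x i : ℝ) = M := sum_kcount h x
  have hsum_y : ∑ i : Fin n, (kcount h y i : ℝ) = M := sum_kcount h y
  set e : Fin n → ℝ := fun i => (kcount h x i : ℝ) - (kcount h y i : ℝ) with hedef
  have hsum_e : ∑ i, e i = 0 := by
    rw [hedef, Finset.sum_sub_distrib, hsum_x, hsum_y, sub_self]
  have habs : ∑ i, |e i| ≤ 2 * D := sum_abs_kcount_sub_le h x y
  have hE : ∑ i, (e i)^2 ≤ 4 * D^2 := by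
    have h1 : ∑ i, (e i)^2 ≤ (∑ i, |e i|)^2 := by
      calc ∑ i, (e i)^2 = ∑ i, |e i|^2 := by simp [sq_abs]
        _ ≤ ∑ i, |e i| * (∑ k, |e k|) := by
            refine Finset.sum_le_sum fun i _ => ?_
            have h2 := Finset.single_le_sum (f := fun k => |e k|)
              (fun k _ => abs_nonneg _) (mem_univ i)
            rw [sq]
            exact mul_le_mul_of_nonneg_left h2 (abs_nonneg _)
        _ = (∑ i, |e i|)^2 := by rw [← Finset.sum_mul]; ring
    have h5 : (0:ℝ) ≤ ∑ i, |e i| := Finset.sum_nonneg fun i _ => abs_nonneg _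
    have h4 := pow_le_pow_left₀ h5 habs 2
    have h6 : (2*D)^2 = 4*D^2 := by ring
    linarith
  have hE0 : (0:ℝ) ≤ ∑ i, (e i)^2 := Finset.sum_nonneg fun i _ => sq_nonneg _
  set S : ℝ := ∑ i : Fin n, (kcount h y i : ℝ)^2 with hSdef
  have hS0 : 0 ≤ S := Finset.sum_nonneg fun i _ => sq_nonneg _
  have hMM1 : (0:ℝ) < M * (M - 1) := mul_pos hMpos hM1
  have hcoll_y_eq : ∑ i : Fin n, (kcount h y i : ℝ) * ((kcount h y i : ℝ) - 1)
      = collEst h y * (M * (M-1)) := by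
    rw [collEst, ← Finset.sum_div, div_mul_cancel₀]
    exact hMM1.ne'
  have hS : S ≤ M*(M-1)*((1+3*ε)*P) + M := by
    have h1 : S = ∑ i : Fin n, (kcount h y i : ℝ) * ((kcount h y i : ℝ) - 1)
        + ∑ i : Fin n, (kcount h y i : ℝ) := by
      rw [hSdef, ← Finset.sum_add_distrib]
      exact Finset.sum_congr rfl fun i _ => by ring
    rw [h1, hcoll_y_eq, hsum_y]
    have h8 := mul_le_mul_of_nonneg_right hcoll_y hMM1.le
    have h9 : (1+3*ε)*P*(M*(M-1)) = M*(M-1)*((1+3*ε)*P) := by ring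
    linarith
  -- Cauchy-Schwarz
  have hCS : |∑ i, (kcount h y i : ℝ) * e i| ≤ Real.sqrt S * (2*D) := by
    have h1 := Finset.sum_mul_sq_le_sq_mul_sq (univ : Finset (Fin n))
      (fun i => (kcount h y i : ℝ)) e
    have h2 : (∑ i, (kcount h y i : ℝ) * e i)^2 ≤ S * (4*D^2) :=
      le_trans h1 (mul_le_mul_of_nonneg_left hE hS0)
    have h3 : Real.sqrt S * (2*D) = Real.sqrt (S * (4*D^2)) := by
      rw [Real.sqrt_mul hS0]
      congr 1
      rw [show (4:ℝ)*D^2 = (2*D)^2 by ring, Real.sqrt_sq (by linarith)]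
    rw [h3, ← Real.sqrt_sq_eq_abs]
    exact Real.sqrt_le_sqrt h2
  -- structural bound
  have hdiff : |collEst h x - collEst h y| ≤ (4*D*Real.sqrt S + 4*D^2) / (M*(M-1)) := by
    have hnum : collEst h x - collEst h y
        = (2 * (∑ i, (kcount h y i : ℝ) * e i) + ∑ i, (e i)^2) / (M*(M-1)) := by
      rw [collEst, collEst, ← Finset.sum_div, ← Finset.sum_div, div_sub_div_same]
      congr 1
      have h1 : ∑ i : Fin n, ((kcount h x i : ℝ) * ((kcount h x i : ℝ) - 1)
          - (kcount h y i : ℝ) * ((kcount h y i : ℝ) - 1))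
          = ∑ i : Fin n, (2 * ((kcount h y i : ℝ) * e i) + (e i)^2 - e i) := by
        refine Finset.sum_congr rfl fun i _ => ?_
        rw [hedef]
        ring
      rw [← Finset.sum_sub_distrib, h1, Finset.sum_sub_distrib, Finset.sum_add_distrib, hsum_e,
        Finset.mul_sum]
      ring
    rw [hnum, abs_div, abs_of_pos hMM1]
    have hb : |2 * (∑ i, (kcount h y i : ℝ) * e i) + ∑ i, (e i)^2|
        ≤ 4*D*Real.sqrt S + 4*D^2 := by
      have h4 := abs_add_le (2 * (∑ i, (kcount h y i : ℝ) * e i)) (∑ i, (e i)^2)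
      rw [abs_mul, abs_of_nonneg hE0] at h4
      have h5 : |(2:ℝ)| = 2 := by norm_num
      rw [h5] at h4
      have h6 : Real.sqrt S * (2*D) * 2 = 4*D*Real.sqrt S := by ring
      linarith [hCS, hE]
    exact (div_le_div_iff_of_pos_right hMM1).mpr hb
  -- numeric endgame
  set Q : ℝ := (1+3*ε)*P/(M-1) + 1/(M-1)^2 with hQdef
  have hQ0 : 0 ≤ Q := by positivity
  have hsqMS : Real.sqrt M * Real.sqrt S ≤ M*(M-1) * Real.sqrt Q := by
    rw [← Real.sqrt_mul hM0]
    have h1 : M * S ≤ (M*(M-1))^2 * Q := by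
      have h2 : (M*(M-1))^2 * Q = M^2*(M-1)*((1+3*ε)*P) + M^2 := by
        rw [hQdef]
        field_simp
      calc M * S ≤ M * (M*(M-1)*((1+3*ε)*P) + M) := mul_le_mul_of_nonneg_left hS hM0
        _ = M^2*(M-1)*((1+3*ε)*P) + M^2 := by ring
        _ = (M*(M-1))^2 * Q := h2.symm
    calc Real.sqrt (M*S) ≤ Real.sqrt ((M*(M-1))^2 * Q) := Real.sqrt_le_sqrt h1
      _ = M*(M-1) * Real.sqrt Q := by
          rw [Real.sqrt_mul (sq_nonneg _), Real.sqrt_sq hMM1.le]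
  have hB : (4*D*Real.sqrt S + 4*D^2) / (M*(M-1)) ≤ 4*s*Real.sqrt Q + 4*s^2/(M-1) := by
    have hsqS0 : 0 ≤ Real.sqrt S := Real.sqrt_nonneg S
    have hsqM0 : 0 ≤ Real.sqrt M := Real.sqrt_nonneg M
    have hb1 : 4*D*Real.sqrt S ≤ 4*s*(M*(M-1))*Real.sqrt Q := by
      calc 4*D*Real.sqrt S ≤ 4*(s*Real.sqrt M)*Real.sqrt S := by
            have := mul_le_mul_of_nonneg_right hD (Real.sqrt_nonneg S)
            linarith
        _ = 4*s*(Real.sqrt M * Real.sqrt S) := by ring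
        _ ≤ 4*s*(M*(M-1)*Real.sqrt Q) := by
            refine mul_le_mul_of_nonneg_left hsqMS (by positivity)
        _ = 4*s*(M*(M-1))*Real.sqrt Q := by ring
    have hb2 : 4*D^2 ≤ 4*s^2*M := by
      have h10 := pow_le_pow_left₀ hD0 hD 2
      have h11 : (s*Real.sqrt M)^2 = s^2*M := by rw [mul_pow, Real.sq_sqrt hM0]
      linarith
    rw [div_le_iff₀ hMM1]
    have heq : (4*s*Real.sqrt Q + 4*s^2/(M-1)) * (M*(M-1))
        = 4*s*(M*(M-1))*Real.sqrt Q + 4*s^2*M := by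
      field_simp
    rw [heq]
    linarith
  -- (ii)
  have hii : 4*Real.sqrt Q ≤ 6*ε*P/(N^(δ/2)) := by
    have hrhs0 : 0 ≤ 6*ε*P/(N^(δ/2)) := by positivity
    have hkey : 16 * Q ≤ (6*ε*P/(N^(δ/2)))^2 := by
      have h2 : (6*ε*P/(N^(δ/2)))^2 = 36*P^2*(ε^2/N^δ) := by
        rw [div_pow, hNδ2sq]
        ring
      rw [h2, hratio]
      have hQeq : Q = ((1+3*ε)*P*(M-1) + 1)/(M-1)^2 := by
        rw [hQdef]
        field_simp
      rw [hQeq, mul_div_assoc', mul_div_assoc']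
      rw [div_le_div_iff₀ (by positivity) hMpos]
      exact numPoly2 ε M N P hε0 hε.le hM225 hNP hnM hPpos
    calc 4*Real.sqrt Q = Real.sqrt (16*Q) := by
          rw [show (16:ℝ)*Q = 4^2*Q by ring, Real.sqrt_mul (by positivity),
            Real.sqrt_sq (by norm_num)]
      _ ≤ Real.sqrt ((6*ε*P/(N^(δ/2)))^2) := Real.sqrt_le_sqrt hkey
      _ = 6*ε*P/(N^(δ/2)) := Real.sqrt_sq hrhs0
  -- (iii)
  have hiii : 4*s^2/(M-1) ≤ 5*s^2*(P*N)/M := numIII M N P s hM225 hNP hPpos hs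
  -- assemble
  have hrhs : ε * P * (6 * s / N^(δ/2) + 5 * s^2 * ε / N^δ)
      = s*(6*ε*P/(N^(δ/2))) + 5*s^2*(P*N)/M := by
    rw [mul_add]
    congr 1
    · ring
    · have : ε * P * (5 * s^2 * ε / N^δ) = 5*s^2*P*(ε^2/N^δ) := by ring
      rw [this, hratio]
      ring
  rw [hrhs]
  have hfin : 4*s*Real.sqrt Q ≤ s*(6*ε*P/(N^(δ/2))) := by
    calc 4*s*Real.sqrt Q = s*(4*Real.sqrt Q) := by ring
      _ ≤ s*(6*ε*P/(N^(δ/2))) := mul_le_mul_of_nonneg_left hii hs.le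
  calc |collEst h x - collEst h y| ≤ (4*D*Real.sqrt S + 4*D^2) / (M*(M-1)) := hdiff
    _ ≤ 4*s*Real.sqrt Q + 4*s^2/(M-1) := hB
    _ ≤ s*(6*ε*P/(N^(δ/2))) + 5*s^2*(P*N)/M := by linarith
end
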